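/- arXiv:2206.08775 — 4 statements merged into one kernel-verified Lean document; each statement's English description precedes it below -/
import Mathlib

section
/- Let A be a finitely generated group with a finite symmetric generating set S_A, and let B be a finite group with a finite symmetric generating set S_B. Then (A ≀ B, S_std) has unbounded depth if and only if (A,S_A) has unbounded depth, where S_std = S_A ∪ S_B is the standard generating set. -/
open scoped Classical

/-- The word length of `g` with respect to a generating set `S`: the least `n` such that
`g` is a product of `n` elements of `S`. -/
noncomputable def wordLength {G : Type*} [Group G] (S : Set G) (g : G) : ℕ :=
  sInf {n | ∃ l : List G, (∀ x ∈ l, x ∈ S) ∧ l.length = n ∧ l.prod = g}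

/-- `g` has depth at least `n` with respect to `S`: multiplying `g` by between `1` and `n`
generators of `S` never increases word length. -/
def HasDepthAtLeast {G : Type*} [Group G] (S : Set G) (g : G) (n : ℕ) : Prop :=
  ∀ l : List G, (∀ x ∈ l, x ∈ S) → 1 ≤ l.length → l.length ≤ n →
    wordLength S (g * l.prod) ≤ wordLength S g

/-- `(G, S)` has unbounded depth: for every `n` there is an element of depth at least `n`. -/
def UnboundedDepth {G : Type*} [Group G] (S : Set G) : Prop :=
  ∀ n : ℕ, ∃ g : G, HasDepthAtLeast S g n

/-- `S` is a finite symmetric generating set of `G`. -/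
structure IsSymmGen {G : Type*} [Group G] (S : Set G) : Prop where
  finite : S.Finite
  symm : ∀ s ∈ S, s⁻¹ ∈ S
  closure_eq_top : Subgroup.closure S = ⊤

/-- The group of finitely supported functions `B → A`, as a subgroup of the direct
product `B → A`. -/
def FinSuppSubgroup (A B : Type*) [Group A] : Subgroup (B → A) where
  carrier := {f | (Function.mulSupport f).Finite}
  one_mem' := by
    simp [Function.mulSupport_one]
  mul_mem' := by
    intro f g hf hg
    exact Set.Finite.subset (hf.union hg) (Function.mulSupport_mul f g)
  inv_mem' := by
    intro f hf
    simpa [Function.mulSupport_inv] using hf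

/-- Left translation by `b ∈ B` on finitely supported functions: `(b · f) x = f (b⁻¹ x)`. -/
def lampTranslate (A B : Type*) [Group A] [Group B] (b : B) :
    FinSuppSubgroup A B ≃* FinSuppSubgroup A B where
  toFun f := ⟨fun x => (f : B → A) (b⁻¹ * x), by
    have h : Function.mulSupport (fun x => (f : B → A) (b⁻¹ * x)) ⊆
        (fun x : B => b⁻¹ * x) ⁻¹' Function.mulSupport (f : B → A) := fun x hx => hx
    exact Set.Finite.subset
      (Set.Finite.preimage (Set.injOn_of_injective (mul_right_injective b⁻¹)) f.2) h⟩
  invFun f := ⟨fun x => (f : B → A) (b * x), by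
    have h : Function.mulSupport (fun x => (f : B → A) (b * x)) ⊆
        (fun x : B => b * x) ⁻¹' Function.mulSupport (f : B → A) := fun x hx => hx
    exact Set.Finite.subset
      (Set.Finite.preimage (Set.injOn_of_injective (mul_right_injective b)) f.2) h⟩
  left_inv f := Subtype.ext (funext fun x => by simp)
  right_inv f := Subtype.ext (funext fun x => by simp)
  map_mul' f g := rfl

/-- The action of `B` on finitely supported functions `B → A` by left translation. -/
def lampAction (A B : Type*) [Group A] [Group B] :
    B →* MulAut (FinSuppSubgroup A B) where
  toFun := lampTranslate A B
  map_one' := by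
    apply MulEquiv.ext
    intro f
    apply Subtype.ext
    funext x
    show (f : B → A) ((1 : B)⁻¹ * x) = (f : B → A) x
    simp
  map_mul' b c := by
    apply MulEquiv.ext
    intro f
    apply Subtype.ext
    funext x
    show (f : B → A) ((b * c)⁻¹ * x) = (f : B → A) (c⁻¹ * (b⁻¹ * x))
    rw [mul_inv_rev, mul_assoc]

/-- The restricted wreath product `A ≀ B`, i.e. the semidirect product
`(⨁_B A) ⋊ B` where `B` acts by left translation. -/
abbrev Wreath (A B : Type*) [Group A] [Group B] :=
  FinSuppSubgroup A B ⋊[lampAction A B] B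

/-- `δ_a`: the finitely supported function sending `1 ∈ B` to `a` and everything else
to `1 ∈ A`. -/
noncomputable def lampSingle (A B : Type*) [Group A] [Group B] (a : A) :
    FinSuppSubgroup A B :=
  ⟨fun x => if x = (1 : B) then a else 1, by
    apply Set.Finite.subset (Set.finite_singleton (1 : B))
    intro x hx
    simp only [Set.mem_singleton_iff]
    by_contra h
    exact hx (if_neg h)⟩

/-- The standard generating set `S_A ∪ S_B` of the wreath product `A ≀ B`, where
`a ∈ S_A` is identified with `(δ_a, 1)` and `b ∈ S_B` with `(𝟙, b)`. -/
noncomputable def stdGen {A B : Type*} [Group A] [Group B] (SA : Set A) (SB : Set B) :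
    Set (Wreath A B) :=
  ((fun a => SemidirectProduct.inl (lampSingle A B a)) '' SA) ∪
    ((fun b => SemidirectProduct.inr b) '' SB)

/-!
Write `w = (f, b) ∈ A ≀ B` and let `C(b)` be the length of a shortest walk in the Cayley graph of
`B` from `1` to `b` through every point of `B`. The letters of a word for `w` from `S_B` form a walk
ending at `b` through every lit lamp, and those from `S_A` spell the lamp values, so
`∑ₓ |f x| ≤ |w|`, even `C(b) + ∑ₓ |f x| ≤ |w|` when every lamp is lit; conversely
`|w| ≤ ∑ₓ |f x| + C(b)`.

If `g` is deep in a nontrivial `A`, take all lamps equal to `g` and the cursor at a maximiser of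
`C`: a short word multiplies each lamp value on the right by a short word of `A`, which does not
increase its length, and cannot increase `C`, so the bounds above keep the length from growing.
If no element of `A` has depth `n`, chaining short length-increasing words raises the lamp under the
cursor of any `w` by more than `max C` within `n (max C + 1)` letters, and the bounds force the
length of `w` to grow. Finite `A` makes both groups finite, and then every element of maximal
length is arbitrarily deep.
-/

open SemidirectProduct Function

section WordLength

variable {G : Type*} [Group G] {S : Set G}

lemma IsSymmGen.submonoid_closure_eq_top (hS : IsSymmGen S) : Submonoid.closure S = ⊤ := by
  have hS' : S ∪ S⁻¹ = S := Set.union_eq_left.mpr fun s hs => by simpa using hS.symm _ hs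
  rw [← hS', ← Subgroup.closure_toSubmonoid, hS.closure_eq_top, Subgroup.top_toSubmonoid]

lemma wordLength_prod_le_length {l : List G} (hl : ∀ x ∈ l, x ∈ S) :
    wordLength S l.prod ≤ l.length :=
  Nat.sInf_le ⟨l, hl, rfl, rfl⟩

lemma exists_word_length_eq_wordLength (hS : Submonoid.closure S = ⊤) (g : G) :
    ∃ l : List G, (∀ x ∈ l, x ∈ S) ∧ l.prod = g ∧ l.length = wordLength S g := by
  obtain ⟨l, hl, rfl⟩ := Submonoid.exists_list_of_mem_closure (hS ▸ Submonoid.mem_top g)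
  have hne :
      {n | ∃ l' : List G, (∀ x ∈ l', x ∈ S) ∧ l'.length = n ∧ l'.prod = l.prod}.Nonempty :=
    ⟨l.length, l, hl, rfl, rfl⟩
  obtain ⟨l', hl', hlen, hprod⟩ := Nat.sInf_mem hne
  exact ⟨l', hl', hprod, hlen⟩

lemma wordLength_one : wordLength S 1 = 0 :=
  Nat.le_zero.mp (wordLength_prod_le_length (l := []) (by simp))

lemma wordLength_eq_zero_iff (hS : Submonoid.closure S = ⊤) {g : G} :
    wordLength S g = 0 ↔ g = 1 := by
  refine ⟨fun h => ?_, fun h => h ▸ wordLength_one⟩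
  obtain ⟨l, -, rfl, hlen⟩ := exists_word_length_eq_wordLength hS g
  simp [List.length_eq_zero_iff.mp (hlen.trans h)]

lemma wordLength_mul_le_succ (hS : Submonoid.closure S = ⊤) (g : G) {s : G} (hs : s ∈ S) :
    wordLength S (g * s) ≤ wordLength S g + 1 := by
  obtain ⟨l, hl, rfl, hlen⟩ := exists_word_length_eq_wordLength hS g
  have := wordLength_prod_le_length (S := S) (l := l ++ [s])
    (List.forall_mem_append.mpr ⟨hl, by simpa using hs⟩)
  simpa [hlen] using this

lemma unboundedDepth_of_finite [Finite G] (S : Set G) : UnboundedDepth S := by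
  obtain ⟨g, hg⟩ := Finite.exists_max (wordLength S)
  exact fun _ => ⟨g, fun l _ _ _ => hg _⟩

lemma HasDepthAtLeast.mono {g : G} {m n : ℕ} (h : HasDepthAtLeast S g n) (hmn : m ≤ n) :
    HasDepthAtLeast S g m :=
  fun l hl h1 hlm => h l hl h1 (hlm.trans hmn)

lemma HasDepthAtLeast.wordLength_mul_prod_le {g : G} {n : ℕ} (h : HasDepthAtLeast S g n)
    {l : List G} (hl : ∀ x ∈ l, x ∈ S) (hln : l.length ≤ n) :
    wordLength S (g * l.prod) ≤ wordLength S g := by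
  rcases Nat.eq_zero_or_pos l.length with hnil | hpos
  · simp [List.length_eq_zero_iff.mp hnil]
  · exact h l hl hpos hln

lemma HasDepthAtLeast.ne_one [Nontrivial G] (hS : Submonoid.closure S = ⊤) {g : G}
    (h : HasDepthAtLeast S g 1) : g ≠ 1 := by
  rintro rfl
  have hS1 : Submonoid.closure S ≤ ⊥ := Submonoid.closure_le.mpr fun s hs => by
    have := h [s] (by simpa) (by simp) (by simp)
    simpa [wordLength_one, wordLength_eq_zero_iff hS] using this
  obtain ⟨a, ha⟩ := exists_ne (1 : G)
  exact ha (Submonoid.mem_bot.mp (hS1 (hS ▸ Submonoid.mem_top a)))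

lemma exists_word_wordLength_add_le {n : ℕ} (hn : ∀ g : G, ¬ HasDepthAtLeast S g n) (k : ℕ)
    (g : G) : ∃ l : List G, (∀ x ∈ l, x ∈ S) ∧ l.length ≤ n * k ∧
      wordLength S g + k ≤ wordLength S (g * l.prod) := by
  induction k with
  | zero => exact ⟨[], by simp, by simp, by simp⟩
  | succ k ih =>
    obtain ⟨u, hu, hulen, hugrow⟩ := ih
    have := hn (g * u.prod)
    simp only [HasDepthAtLeast, not_forall, not_le, exists_prop] at this
    obtain ⟨l, hl, -, hln, hlgrow⟩ := this
    refine ⟨u ++ l, fun x hx => ?_, ?_, ?_⟩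
    · exact (List.mem_append.mp hx).elim (hu x) (hl x)
    · rw [List.length_append, Nat.mul_succ]; omega
    · rw [List.prod_append, ← mul_assoc]; omega

end WordLength

section Walks

variable {B : Type*} [Group B] {SB : Set B}

/-- The points of the walk `1, β₁, β₁β₂, …, β₁⋯βₖ` in the Cayley graph described by
`m = [β₁, …, βₖ]`. -/
def visited (m : List B) : Set B := {p | ∃ t, t <+: m ∧ t.prod = p}

lemma prod_mem_visited (m : List B) : m.prod ∈ visited m := ⟨m, List.prefix_refl m, rfl⟩

lemma visited_nil : visited ([] : List B) = {1} := by
  ext p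
  simp [visited, eq_comm]

lemma visited_subset_append (m m' : List B) : visited m ⊆ visited (m ++ m') :=
  fun _ ⟨t, ht, hp⟩ => ⟨t, ht.trans (List.prefix_append m m'), hp⟩

lemma visited_append_singleton (m : List B) (β : B) :
    visited (m ++ [β]) = insert (m.prod * β) (visited m) := by
  ext p
  simp only [visited, List.prefix_concat_iff, Set.mem_ofPred_eq, Set.mem_insert_iff]
  constructor
  · rintro ⟨t, rfl | ht, rfl⟩
    exacts [Or.inl (by simp), Or.inr ⟨t, ht, rfl⟩]
  · rintro (rfl | ⟨t, ht, rfl⟩)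
    exacts [⟨m ++ [β], Or.inl rfl, by simp⟩, ⟨t, Or.inr ht, rfl⟩]

lemma exists_walk_visiting (hB : Submonoid.closure SB = ⊤) (s : List B) (b : B) :
    ∃ m : List B, (∀ x ∈ m, x ∈ SB) ∧ m.prod = b ∧ ∀ q ∈ s, q ∈ visited m := by
  induction s generalizing b with
  | nil =>
    obtain ⟨m, hm, hprod⟩ := Submonoid.exists_list_of_mem_closure (hB ▸ Submonoid.mem_top b)
    exact ⟨m, hm, hprod, by simp⟩
  | cons p s ih =>
    obtain ⟨m, hm, rfl, hvis⟩ := ih p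
    obtain ⟨m', hm', hprod'⟩ :=
      Submonoid.exists_list_of_mem_closure (hB ▸ Submonoid.mem_top (m.prod⁻¹ * b))
    refine ⟨m ++ m', List.forall_mem_append.mpr ⟨hm, hm'⟩, by simp [hprod'], ?_⟩
    simp only [List.mem_cons, forall_eq_or_imp]
    exact ⟨visited_subset_append m m' (prod_mem_visited m),
      fun q hq => visited_subset_append m m' (hvis q hq)⟩

noncomputable def coverLength (SB : Set B) (b : B) : ℕ :=
  sInf {k | ∃ m : List B, (∀ x ∈ m, x ∈ SB) ∧ m.length = k ∧ m.prod = b ∧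
    visited m = Set.univ}

lemma coverLength_le {m : List B} (hm : ∀ x ∈ m, x ∈ SB) (hcov : visited m = Set.univ) :
    coverLength SB m.prod ≤ m.length :=
  Nat.sInf_le ⟨m, hm, rfl, rfl, hcov⟩

lemma exists_length_eq_coverLength [Finite B] (hB : Submonoid.closure SB = ⊤) (b : B) :
    ∃ m : List B, (∀ x ∈ m, x ∈ SB) ∧ m.length = coverLength SB b ∧ m.prod = b ∧
      visited m = Set.univ := by
  have := Fintype.ofFinite B
  obtain ⟨m, hm, hprod, hvis⟩ := exists_walk_visiting hB Finset.univ.toList b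
  have hne : {k | ∃ m : List B, (∀ x ∈ m, x ∈ SB) ∧ m.length = k ∧ m.prod = b ∧
      visited m = Set.univ}.Nonempty :=
    ⟨m.length, m, hm, rfl, hprod, Set.eq_univ_of_forall fun q => hvis q (by simp)⟩
  exact Nat.sInf_mem hne

end Walks

section Wreath

variable {A B : Type*} [Group A] [Group B] {SA : Set A} {SB : Set B}

lemma coe_lampSingle (a : A) : (lampSingle A B a : B → A) = Pi.mulSingle 1 a := by
  ext x
  simp [lampSingle, Pi.mulSingle_apply]

noncomputable def lampSingleHom : A →* FinSuppSubgroup A B where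
  toFun := lampSingle A B
  map_one' := Subtype.ext (by simp [coe_lampSingle])
  map_mul' _ _ := Subtype.ext (by simp [coe_lampSingle, Pi.mulSingle_mul])

noncomputable def lampAt (c : B) : A →* FinSuppSubgroup A B :=
  (lampAction A B c).toMonoidHom.comp lampSingleHom

lemma coe_lampAt (c : B) (a : A) : (lampAt c a : B → A) = Pi.mulSingle c a := by
  ext x
  simp [lampAt, lampSingleHom, lampAction, lampTranslate, coe_lampSingle, Pi.mulSingle_apply,
    inv_mul_eq_one, eq_comm]

lemma coe_mul_lampAt (f : FinSuppSubgroup A B) (c : B) (a : A) :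
    ((f * lampAt c a : FinSuppSubgroup A B) : B → A) =
      update (f : B → A) c ((f : B → A) c * a) := by
  ext x
  rcases eq_or_ne x c with rfl | hx <;> simp [coe_lampAt, *]

lemma mul_inl_lampSingle (w : Wreath A B) (a : A) :
    w * inl (lampSingle A B a) = ⟨w.left * lampAt w.right a, w.right⟩ :=
  SemidirectProduct.ext rfl (mul_one _)

lemma mul_inr (w : Wreath A B) (β : B) : w * inr β = ⟨w.left, w.right * β⟩ :=
  SemidirectProduct.ext (by simp [SemidirectProduct.mul_left]) rfl

lemma prod_map_inl_lampSingle (t : List A) :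
    (t.map fun a => (inl (lampSingle A B a) : Wreath A B)).prod = inl (lampSingle A B t.prod) :=
  (map_list_prod (inl.comp lampSingleHom) t).symm

lemma inl_lampSingle_mem_stdGen {a : A} (ha : a ∈ SA) :
    inl (lampSingle A B a) ∈ stdGen SA SB :=
  Or.inl ⟨a, ha, rfl⟩

lemma inr_mem_stdGen {β : B} (hβ : β ∈ SB) : inr β ∈ stdGen SA SB :=
  Or.inr ⟨β, hβ, rfl⟩

lemma forall_mem_map_inl_lampSingle {t : List A} (ht : ∀ x ∈ t, x ∈ SA) :
    ∀ x ∈ t.map (fun a => (inl (lampSingle A B a) : Wreath A B)), x ∈ stdGen SA SB := by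
  simpa using fun a ha => inl_lampSingle_mem_stdGen (ht a ha)

noncomputable def lampLength [Fintype B] (SA : Set A) (f : FinSuppSubgroup A B) : ℕ :=
  ∑ x, wordLength SA ((f : B → A) x)

lemma lampLength_mul_lampAt_add [Fintype B] (f : FinSuppSubgroup A B) (c : B) (a : A) :
    lampLength SA (f * lampAt c a) + wordLength SA ((f : B → A) c) =
      lampLength SA f + wordLength SA ((f : B → A) c * a) := by
  simp only [lampLength, coe_mul_lampAt, apply_update (fun _ => wordLength SA),
    Finset.sum_update_of_mem (Finset.mem_univ c), Finset.sdiff_singleton_eq_erase,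
    ← Finset.add_sum_erase Finset.univ (fun x => wordLength SA ((f : B → A) x))
      (Finset.mem_univ c)]
  ring

structure IsLampWalk (SB : Set B) (m : List B) (w : Wreath A B) : Prop where
  mem : ∀ x ∈ m, x ∈ SB
  prod_eq : m.prod = w.right
  mulSupport_subset : mulSupport (w.left : B → A) ⊆ visited m

noncomputable def lampOff (w : Wreath A B) : Wreath A B :=
  ⟨w.left * lampAt w.right ((w.left : B → A) w.right)⁻¹, w.right⟩

lemma coe_lampOff_left (w : Wreath A B) :
    ((lampOff w).left : B → A) = update (w.left : B → A) w.right 1 := by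
  rw [lampOff, coe_mul_lampAt, mul_inv_cancel]

lemma lampOff_mul_inl_lampSingle (w : Wreath A B) :
    lampOff w * inl (lampSingle A B ((w.left : B → A) w.right)) = w := by
  rw [mul_inl_lampSingle]
  exact SemidirectProduct.ext (by simp [lampOff, mul_assoc]) rfl

lemma lampLength_lampOff_add [Fintype B] (w : Wreath A B) :
    lampLength SA (lampOff w).left + wordLength SA ((w.left : B → A) w.right) =
      lampLength SA w.left := by
  rw [lampOff, lampLength_mul_lampAt_add, mul_inv_cancel, wordLength_one, add_zero]

lemma exists_word_of_lampOff (hA : Submonoid.closure SA = ⊤) {w : Wreath A B} {n : ℕ}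
    (h : ∃ l : List (Wreath A B), (∀ x ∈ l, x ∈ stdGen SA SB) ∧ l.prod = lampOff w ∧
      l.length ≤ n) :
    ∃ l : List (Wreath A B), (∀ x ∈ l, x ∈ stdGen SA SB) ∧ l.prod = w ∧
      l.length ≤ n + wordLength SA ((w.left : B → A) w.right) := by
  obtain ⟨l, hl, hprod, hlen⟩ := h
  obtain ⟨t, ht, htprod, htlen⟩ :=
    exists_word_length_eq_wordLength hA ((w.left : B → A) w.right)
  refine ⟨l ++ t.map fun a => (inl (lampSingle A B a) : Wreath A B),
    List.forall_mem_append.mpr ⟨hl, forall_mem_map_inl_lampSingle ht⟩, ?_, ?_⟩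
  · rw [List.prod_append, prod_map_inl_lampSingle, hprod, htprod, lampOff_mul_inl_lampSingle]
  · simp only [List.length_append, List.length_map]
    omega

lemma IsLampWalk.exists_word [Fintype B] (hA : Submonoid.closure SA = ⊤) {m : List B}
    {w : Wreath A B} (hw : IsLampWalk SB m w) :
    ∃ l : List (Wreath A B), (∀ x ∈ l, x ∈ stdGen SA SB) ∧ l.prod = w ∧
      l.length ≤ lampLength SA w.left + m.length := by
  induction m using List.reverseRecOn generalizing w with
  | nil =>
    have hoff : lampOff w = 1 := by
      refine SemidirectProduct.ext (Subtype.ext ?_) hw.prod_eq.symm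
      rw [coe_lampOff_left, one_left, OneMemClass.coe_one, ← mulSupport_eq_empty_iff,
        mulSupport_update_one, Set.sdiff_eq_empty, ← hw.prod_eq, List.prod_nil, ← visited_nil]
      exact hw.mulSupport_subset
    have := lampLength_lampOff_add (SA := SA) w
    obtain ⟨l, hl, hprod, hlen⟩ :=
      exists_word_of_lampOff hA (n := 0) ⟨[], by simp, hoff.symm, le_rfl⟩
    exact ⟨l, hl, hprod, by simp only [List.length_nil]; omega⟩
  | append_singleton m β ih =>
    have hc : m.prod * β = w.right := by simpa using hw.prod_eq
    have hw' : IsLampWalk SB m ⟨(lampOff w).left, m.prod⟩ := by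
      refine ⟨fun x hx => hw.mem x (by simp [hx]), rfl, ?_⟩
      rw [coe_lampOff_left, mulSupport_update_one, Set.sdiff_subset_iff, Set.singleton_union,
        ← hc, ← visited_append_singleton]
      exact hw.mulSupport_subset
    obtain ⟨l, hl, hprod, hlen⟩ := ih hw'
    dsimp only at hlen
    have hoff : l.prod * inr β = lampOff w := by
      rw [hprod, mul_inr, hc]
      rfl
    have hβ : inr β ∈ stdGen SA SB := inr_mem_stdGen (hw.mem β (by simp))
    obtain ⟨l', hl', hprod', hlen'⟩ := exists_word_of_lampOff hA (n := l.length + 1)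
      ⟨l ++ [inr β], List.forall_mem_append.mpr ⟨hl, by simpa using hβ⟩, by simpa using hoff,
        by simp⟩
    have := lampLength_lampOff_add (SA := SA) w
    exact ⟨l', hl', hprod', by simp only [List.length_append, List.length_singleton]; omega⟩

lemma IsLampWalk.exists_isLampWalk_mul [Fintype B] (hA : Submonoid.closure SA = ⊤) {m : List B}
    {w : Wreath A B} (hw : IsLampWalk SB m w) {s : Wreath A B} (hs : s ∈ stdGen SA SB) :
    ∃ m' : List B, IsLampWalk SB m' (w * s) ∧
      m'.length + lampLength SA (w * s).left ≤ m.length + lampLength SA w.left + 1 := by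
  rcases hs with ⟨a, ha, rfl⟩ | ⟨β, hβ, rfl⟩
  · rw [mul_inl_lampSingle]
    refine ⟨m, ⟨hw.mem, hw.prod_eq, ?_⟩, ?_⟩
    · intro x hx
      rw [coe_mul_lampAt] at hx
      rcases eq_or_ne x w.right with rfl | hxc
      · exact hw.prod_eq ▸ prod_mem_visited m
      · exact hw.mulSupport_subset (by simpa [hxc] using hx)
    · have := lampLength_mul_lampAt_add (SA := SA) w.left w.right a
      have := wordLength_mul_le_succ hA ((w.left : B → A) w.right) ha
      dsimp only
      omega
  · rw [mul_inr]
    refine ⟨m ++ [β], ⟨List.forall_mem_append.mpr ⟨hw.mem, by simpa using hβ⟩,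
      by simp [hw.prod_eq], hw.mulSupport_subset.trans (visited_subset_append _ _)⟩, ?_⟩
    simp only [List.length_append, List.length_singleton]
    omega

lemma exists_isLampWalk_of_word [Fintype B] (hA : Submonoid.closure SA = ⊤)
    {l : List (Wreath A B)} (hl : ∀ x ∈ l, x ∈ stdGen SA SB) :
    ∃ m : List B, IsLampWalk SB m l.prod ∧ m.length + lampLength SA l.prod.left ≤ l.length := by
  induction l using List.reverseRecOn with
  | nil => exact ⟨[], ⟨by simp, rfl, by simp⟩, by simp [lampLength, wordLength_one]⟩
  | append_singleton l s ih =>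
    obtain ⟨m, hm, hlen⟩ := ih fun x hx => hl x (by simp [hx])
    obtain ⟨m', hm', hlen'⟩ := hm.exists_isLampWalk_mul hA (hl s (by simp))
    refine ⟨m', by simpa using hm', ?_⟩
    simp only [List.prod_append, List.prod_singleton, List.length_append, List.length_singleton]
    omega

lemma exists_word_left_mul_prod {l : List (Wreath A B)} (hl : ∀ x ∈ l, x ∈ stdGen SA SB)
    (w : Wreath A B) (x : B) :
    ∃ t : List A, (∀ a ∈ t, a ∈ SA) ∧ t.length ≤ l.length ∧
      ((w * l.prod).left : B → A) x = (w.left : B → A) x * t.prod := by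
  induction l generalizing w with
  | nil => exact ⟨[], by simp, by simp, by simp⟩
  | cons s l ih =>
    obtain ⟨t, ht, htlen, hx⟩ := ih (fun y hy => hl y (by simp [hy])) (w * s)
    rw [List.prod_cons, ← mul_assoc, hx]
    rcases hl s (by simp) with ⟨a, ha, rfl⟩ | ⟨β, -, rfl⟩
    · rw [mul_inl_lampSingle, coe_mul_lampAt]
      rcases eq_or_ne x w.right with rfl | hxc
      · exact ⟨a :: t, by simpa [ha] using ht, by simpa using htlen, by simp [mul_assoc]⟩
      · exact ⟨t, ht, htlen.trans (by simp), by simp [hxc]⟩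
    · exact ⟨t, ht, htlen.trans (by simp), by rw [mul_inr]⟩

section Estimates

variable [Fintype B]

lemma submonoid_closure_stdGen (hA : Submonoid.closure SA = ⊤) (hB : Submonoid.closure SB = ⊤) :
    Submonoid.closure (stdGen SA SB) = ⊤ := by
  refine (Submonoid.eq_top_iff' _).mpr fun w => ?_
  obtain ⟨m, hm, -, hprod, hcov⟩ := exists_length_eq_coverLength hB w.right
  obtain ⟨l, hl, rfl, -⟩ := (IsLampWalk.mk hm hprod (hcov ▸ Set.subset_univ _)).exists_word hA
  exact Submonoid.list_prod_mem _ fun x hx => Submonoid.subset_closure (hl x hx)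

lemma wordLength_le_lampLength_add_coverLength (hA : Submonoid.closure SA = ⊤)
    (hB : Submonoid.closure SB = ⊤) (w : Wreath A B) :
    wordLength (stdGen SA SB) w ≤ lampLength SA w.left + coverLength SB w.right := by
  obtain ⟨m, hm, hlen, hprod, hcov⟩ := exists_length_eq_coverLength hB w.right
  obtain ⟨l, hl, rfl, hl_len⟩ :=
    (IsLampWalk.mk hm hprod (hcov ▸ Set.subset_univ _)).exists_word hA
  exact (wordLength_prod_le_length hl).trans (hlen ▸ hl_len)

lemma exists_isLampWalk_length_add_le_wordLength (hA : Submonoid.closure SA = ⊤)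
    (hB : Submonoid.closure SB = ⊤) (w : Wreath A B) :
    ∃ m : List B, IsLampWalk SB m w ∧
      m.length + lampLength SA w.left ≤ wordLength (stdGen SA SB) w := by
  obtain ⟨l, hl, rfl, hlen⟩ := exists_word_length_eq_wordLength (submonoid_closure_stdGen hA hB) w
  obtain ⟨m, hm, hm_len⟩ := exists_isLampWalk_of_word hA hl
  exact ⟨m, hm, hlen ▸ hm_len⟩

lemma lampLength_le_wordLength (hA : Submonoid.closure SA = ⊤)
    (hB : Submonoid.closure SB = ⊤) (w : Wreath A B) :
    lampLength SA w.left ≤ wordLength (stdGen SA SB) w := by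
  obtain ⟨m, -, hlen⟩ := exists_isLampWalk_length_add_le_wordLength hA hB w
  omega

lemma coverLength_add_lampLength_le_wordLength (hA : Submonoid.closure SA = ⊤)
    (hB : Submonoid.closure SB = ⊤) {w : Wreath A B} (hlit : ∀ x, (w.left : B → A) x ≠ 1) :
    coverLength SB w.right + lampLength SA w.left ≤ wordLength (stdGen SA SB) w := by
  obtain ⟨m, hm, hlen⟩ := exists_isLampWalk_length_add_le_wordLength hA hB w
  have : coverLength SB w.right ≤ m.length :=
    hm.prod_eq ▸ coverLength_le hm.mem
      (Set.eq_univ_of_forall fun x => hm.mulSupport_subset (hlit x))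
  omega

end Estimates

theorem UnboundedDepth.of_wreath [Fintype B] (hA : Submonoid.closure SA = ⊤)
    (hB : Submonoid.closure SB = ⊤) (h : UnboundedDepth (stdGen SA SB)) : UnboundedDepth SA := by
  by_contra hA'
  obtain ⟨n, hn⟩ := not_forall.mp hA'
  obtain ⟨b₀, hb₀⟩ := Finite.exists_max (coverLength SB)
  obtain ⟨w, hw⟩ := h (n * (coverLength SB b₀ + 1))
  obtain ⟨u, hu, hulen, hgrow⟩ := exists_word_wordLength_add_le (not_exists.mp hn)
    (coverLength SB b₀ + 1) ((w.left : B → A) w.right)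
  have hu_ne : u ≠ [] := by
    rintro rfl
    simp at hgrow
  have hdeep := hw _ (forall_mem_map_inl_lampSingle hu)
    (by rw [List.length_map]; exact List.length_pos_iff.mpr hu_ne) (by simpa using hulen)
  rw [prod_map_inl_lampSingle, mul_inl_lampSingle] at hdeep
  have hup := wordLength_le_lampLength_add_coverLength hA hB w
  have hlow := lampLength_le_wordLength hA hB ⟨w.left * lampAt w.right u.prod, w.right⟩
  have hlamp := lampLength_mul_lampAt_add (SA := SA) w.left w.right u.prod
  have := hb₀ w.right
  dsimp only at hlow
  omega

theorem UnboundedDepth.wreath [Fintype B] [Nontrivial A] (hA : Submonoid.closure SA = ⊤)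
    (hB : Submonoid.closure SB = ⊤) (h : UnboundedDepth SA) : UnboundedDepth (stdGen SA SB) := by
  intro n
  obtain ⟨g, hg⟩ := h (max n 1)
  have hg1 : g ≠ 1 := (hg.mono (le_max_right n 1)).ne_one hA
  obtain ⟨b₀, hb₀⟩ := Finite.exists_max (coverLength SB)
  let w : Wreath A B := ⟨⟨fun _ => g, Set.toFinite _⟩, b₀⟩
  refine ⟨w, fun l hl _ hln => ?_⟩
  have hlamps : lampLength SA (w * l.prod).left ≤ lampLength SA w.left :=
    Finset.sum_le_sum fun x _ => by
      obtain ⟨t, ht, htlen, hx⟩ := exists_word_left_mul_prod hl w x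
      rw [hx]
      exact hg.wordLength_mul_prod_le ht (htlen.trans (hln.trans (le_max_left n 1)))
  calc wordLength (stdGen SA SB) (w * l.prod)
      ≤ lampLength SA (w * l.prod).left + coverLength SB (w * l.prod).right :=
        wordLength_le_lampLength_add_coverLength hA hB _
    _ ≤ lampLength SA w.left + coverLength SB w.right := add_le_add hlamps (hb₀ _)
    _ ≤ wordLength (stdGen SA SB) w := by
        rw [add_comm]
        exact coverLength_add_lampLength_le_wordLength hA hB fun _ => hg1

end Wreath

/-- For `B` a finite group, `(A ≀ B, S_A ∪ S_B)` has unbounded depth iff `(A, S_A)`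
does. -/
theorem wreath_finite_base_unboundedDepth_iff {A B : Type*} [Group A] [Group B] [Finite B]
    (SA : Set A) (SB : Set B) (hSA : IsSymmGen SA) (hSB : IsSymmGen SB) :
    UnboundedDepth (stdGen SA SB) ↔ UnboundedDepth SA := by
  have := Fintype.ofFinite B
  have hA := hSA.submonoid_closure_eq_top
  have hB := hSB.submonoid_closure_eq_top
  refine ⟨UnboundedDepth.of_wreath hA hB, fun h => ?_⟩
  rcases subsingleton_or_nontrivial A with _ | _
  · have : Finite (Wreath A B) := Finite.of_equiv _ SemidirectProduct.equivProd.symm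
    exact unboundedDepth_of_finite _
  · exact h.wreath hA hB
end

section
/- Let X be a finite nonempty set, F(X) the free group on X, and S = X ∪ X⁻¹. Then for all u, v ∈ F(X) and every finite subset H ⊆ F(X), the minimal number of edges of a walk in Cay(F(X),S) from u to v visiting every element of H equals 2·|[u,H] ∖ [u,v]| + |[u,v]|. -/
open scoped Classical

/-- The Cayley graph of `G` with respect to `S`: an edge between `g` and `g * s` for
each `s ∈ S`. -/
def cayley {G : Type*} [Group G] (S : Set G) : SimpleGraph G :=
  SimpleGraph.fromRel (fun x y => ∃ s ∈ S, y = x * s)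

/-- `TS S b b' F`: the minimal number of edges of a walk in the Cayley graph `Cay(G, S)`
from `b` to `b'` that visits every element of `F` (`0` if no such walk exists). -/
noncomputable def TS {G : Type*} [Group G] (S : Set G) (b b' : G) (F : Set G) : ℕ :=
  sInf {n | ∃ w : (cayley S).Walk b b', (∀ x ∈ F, x ∈ w.support) ∧ w.length = n}

/-- The symmetric generating set `X ∪ X⁻¹` of the free group `F(X)`. -/
def freeGenSet (X : Type*) : Set (FreeGroup X) :=
  {g | ∃ x : X, g = FreeGroup.of x ∨ g = (FreeGroup.of x)⁻¹}

/-- `[u, v]`: the set of edges of the unique geodesic from `u` to `v` in the Cayley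
tree of `F(X)` with respect to `X ∪ X⁻¹`; its vertices are `u` multiplied by the
prefixes of the reduced word of `u⁻¹v`. -/
def geodEdges {X : Type*} [DecidableEq X] (u v : FreeGroup X) :
    Set (Sym2 (FreeGroup X)) :=
  {e | ∃ i < (FreeGroup.toWord (u⁻¹ * v)).length,
    e = s(u * FreeGroup.mk ((FreeGroup.toWord (u⁻¹ * v)).take i),
          u * FreeGroup.mk ((FreeGroup.toWord (u⁻¹ * v)).take (i + 1)))}

/-- `[u, H]`: the union of the geodesic edge sets `[u, h]` over `h ∈ H`. -/
def geodUnion {X : Type*} [DecidableEq X] (u : FreeGroup X) (H : Set (FreeGroup X)) :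
    Set (Sym2 (FreeGroup X)) :=
  ⋃ h ∈ H, geodEdges u h

/-!
The Cayley graph is a tree whose path metric is `wordDist x y = |x⁻¹y|`, and an edge `pq` lies on
the geodesic `[u, v]` exactly when it separates `u` from `v`; hence `[a, c] = [a, b] ∆ [b, c]`.

Lower bound: a walk from `u` to `v` crosses every edge of `[u, v]`, and if it visits `h`, every edge
of `[u, h] \ [u, v]` is crossed once before reaching `h` and once more, as an edge of `[h, v]`,
afterwards.

Upper bound, by induction on `H`: the geodesic from `u` to a new vertex `h` follows the geodesics
already covered up to a branch vertex and uses only new edges after it, so a detour from the branch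
vertex to `h` and back costs exactly twice the number of new edges.
-/

theorem List.sum_count_le_length {ι : Type*} [DecidableEq ι] (l : List ι) (s : Finset ι) :
    ∑ a ∈ s, l.count a ≤ l.length :=
  calc ∑ a ∈ s, l.count a ≤ ∑ a ∈ s ∪ l.toFinset, l.count a :=
        Finset.sum_le_sum_of_subset Finset.subset_union_left
    _ = l.length := by
        simpa using Multiset.sum_count_eq_card (m := (l : Multiset ι)) fun a ha => by simp_all

theorem SimpleGraph.Walk.exists_detour {V : Type*} {G : SimpleGraph V} {a b m c : V}
    (w : G.Walk a b) (hm : m ∈ w.support) (g : G.Walk m c) :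
    ∃ w' : G.Walk a b, w'.length = w.length + 2 * g.length ∧
      ∀ x, x ∈ w.support ∨ x ∈ g.support → x ∈ w'.support := by
  refine ⟨(w.takeUntil m hm).append ((g.append g.reverse).append (w.dropUntil m hm)), ?_, ?_⟩
  · have := congrArg SimpleGraph.Walk.length (w.take_spec hm)
    simp only [SimpleGraph.Walk.length_append, SimpleGraph.Walk.length_reverse] at this ⊢
    omega
  · intro x hx
    rw [← w.take_spec hm, SimpleGraph.Walk.mem_support_append_iff] at hx
    simp only [SimpleGraph.Walk.mem_support_append_iff]
    tauto

namespace FreeGroup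

variable {X : Type*} [DecidableEq X]

theorem toWord_mk_of_isReduced {L : List (X × Bool)} (h : IsReduced L) : toWord (mk L) = L := by
  rw [toWord_mk, h.reduce_eq]

theorem toWord_mul_of_norm_mul_eq {x y : FreeGroup X} (h : norm (x * y) = norm x + norm y) :
    toWord (x * y) = toWord x ++ toWord y := by
  rw [norm, norm, norm, toWord_mul, ← List.length_append] at h
  rw [toWord_mul]
  exact reduce.red.sublist.eq_of_length h

theorem norm_mul_mul_of_norm_mul_eq {x y z : FreeGroup X}
    (hxy : norm (x * y) = norm x + norm y) (hyz : norm (y * z) = norm y + norm z) (hy : y ≠ 1) :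
    norm (x * y * z) = norm x + norm y + norm z := by
  have hred : IsReduced (toWord x ++ toWord y ++ toWord z) := by
    refine IsReduced.append_overlap ?_ ?_ (toWord_eq_nil_iff.not.mpr hy)
    · rw [← toWord_mul_of_norm_mul_eq hxy]; exact isReduced_toWord
    · rw [← toWord_mul_of_norm_mul_eq hyz]; exact isReduced_toWord
  have hmk : mk (toWord x ++ toWord y ++ toWord z) = x * y * z := by
    rw [← mul_mk, ← mul_mk, mk_toWord, mk_toWord, mk_toWord]
  rw [norm, ← hmk, toWord_mk_of_isReduced hred, List.length_append, List.length_append]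
  rfl

theorem exists_norm_add_norm_eq (x y : FreeGroup X) :
    ∃ n, norm x + norm y = norm (x * y) + 2 * n := by
  rw [norm, norm, norm, toWord_mul, ← List.length_append]
  exact reduce.red.length

/-- The path metric of the Cayley tree of `FreeGroup X` with respect to `X ∪ X⁻¹`. -/
def wordDist (x y : FreeGroup X) : ℕ := norm (x⁻¹ * y)

theorem wordDist_comm (x y : FreeGroup X) : wordDist x y = wordDist y x := by
  rw [wordDist, wordDist, ← norm_inv_eq, mul_inv_rev, inv_inv]

theorem wordDist_eq_zero {x y : FreeGroup X} : wordDist x y = 0 ↔ x = y := by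
  rw [wordDist, norm_eq_zero, inv_mul_eq_one]

theorem wordDist_self (x : FreeGroup X) : wordDist x x = 0 :=
  wordDist_eq_zero.mpr rfl

theorem wordDist_triangle (x y z : FreeGroup X) : wordDist x z ≤ wordDist x y + wordDist y z := by
  have := norm_mul_le (x⁻¹ * y) (y⁻¹ * z)
  rwa [mul_assoc, mul_inv_cancel_left] at this

theorem exists_wordDist_add_wordDist_eq (x y z : FreeGroup X) :
    ∃ n, wordDist x y + wordDist y z = wordDist x z + 2 * n := by
  have := exists_norm_add_norm_eq (x⁻¹ * y) (y⁻¹ * z)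
  rwa [mul_assoc, mul_inv_cancel_left] at this

/-- The triangle inequality bounds the difference by one, and parity rules out equality. -/
theorem wordDist_eq_succ_or_eq_succ {p q : FreeGroup X} (hpq : wordDist p q = 1)
    (x : FreeGroup X) :
    wordDist x q = wordDist x p + 1 ∨ wordDist x p = wordDist x q + 1 := by
  obtain ⟨n, hn⟩ := exists_wordDist_add_wordDist_eq x p q
  have h₁ := wordDist_triangle x p q
  have h₂ := wordDist_triangle x q p
  rw [wordDist_comm q p] at h₂
  omega

theorem mem_freeGenSet_iff {s : FreeGroup X} : s ∈ freeGenSet X ↔ norm s = 1 := by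
  constructor
  · rintro ⟨x, rfl | rfl⟩ <;> simp
  · intro h
    obtain ⟨⟨x, b⟩, hs⟩ := List.length_eq_one_iff.mp h
    rw [← mk_toWord (x := s), hs]
    exact ⟨x, by cases b <;> [exact Or.inr rfl; exact Or.inl rfl]⟩

theorem cayley_adj_iff {x y : FreeGroup X} :
    (cayley (freeGenSet X)).Adj x y ↔ wordDist x y = 1 := by
  rw [cayley, SimpleGraph.fromRel_adj]
  constructor
  · rintro ⟨-, ⟨s, hs, rfl⟩ | ⟨s, hs, rfl⟩⟩
    · rw [wordDist, inv_mul_cancel_left, ← mem_freeGenSet_iff]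
      exact hs
    · rw [wordDist_comm, wordDist, inv_mul_cancel_left, ← mem_freeGenSet_iff]
      exact hs
  · intro h
    refine ⟨fun hxy => ?_,
      Or.inl ⟨x⁻¹ * y, mem_freeGenSet_iff.mpr h, (mul_inv_cancel_left x y).symm⟩⟩
    rw [hxy, wordDist_self] at h
    exact zero_ne_one h

section Geodesic

variable {p q u v : FreeGroup X}

def geodVert (u v : FreeGroup X) (i : ℕ) : FreeGroup X :=
  u * mk ((toWord (u⁻¹ * v)).take i)

def geodEdge (u v : FreeGroup X) (i : ℕ) : Sym2 (FreeGroup X) :=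
  s(geodVert u v i, geodVert u v (i + 1))

theorem mem_geodEdges_iff {e : Sym2 (FreeGroup X)} :
    e ∈ geodEdges u v ↔ ∃ i < wordDist u v, e = geodEdge u v i :=
  Iff.rfl

theorem toWord_inv_mul_geodVert (i : ℕ) :
    toWord (u⁻¹ * geodVert u v i) = (toWord (u⁻¹ * v)).take i := by
  rw [geodVert, inv_mul_cancel_left,
    toWord_mk_of_isReduced (isReduced_toWord.infix (List.take_prefix _ _).isInfix)]

theorem toWord_geodVert_inv_mul (i : ℕ) :
    toWord ((geodVert u v i)⁻¹ * v) = (toWord (u⁻¹ * v)).drop i := by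
  have : (geodVert u v i)⁻¹ * v = mk ((toWord (u⁻¹ * v)).drop i) := by
    rw [geodVert, mul_inv_rev, mul_assoc, inv_mul_eq_iff_eq_mul, mul_mk, List.take_append_drop,
      mk_toWord]
  rw [this, toWord_mk_of_isReduced (isReduced_toWord.infix (List.drop_suffix _ _).isInfix)]

theorem wordDist_geodVert_left (i : ℕ) : wordDist u (geodVert u v i) = min i (wordDist u v) := by
  rw [wordDist, norm, toWord_inv_mul_geodVert, List.length_take]
  rfl

theorem wordDist_geodVert_right (i : ℕ) : wordDist (geodVert u v i) v = wordDist u v - i := by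
  rw [wordDist, norm, toWord_geodVert_inv_mul, List.length_drop]
  rfl

theorem geodVert_zero : geodVert u v 0 = u := by
  rw [geodVert, List.take_zero]
  exact mul_one u

theorem geodVert_of_le {i : ℕ} (h : wordDist u v ≤ i) : geodVert u v i = v := by
  rw [geodVert, List.take_of_length_le h, mk_toWord, mul_inv_cancel_left]

theorem geodVert_geodVert (i k : ℕ) : geodVert (geodVert u v i) v k = geodVert u v (i + k) := by
  rw [geodVert, toWord_geodVert_inv_mul, geodVert, geodVert, mul_assoc, mul_mk, ← List.take_add]

theorem geodVert_geodVert_of_le {i n : ℕ} (h : i ≤ n) :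
    geodVert u (geodVert u v n) i = geodVert u v i := by
  rw [geodVert, toWord_inv_mul_geodVert, List.take_take, min_eq_left h, geodVert]

theorem geodVert_eq_geodVert_of_le {a b : FreeGroup X} {i n : ℕ}
    (h : geodVert u a n = geodVert u b n) (hi : i ≤ n) : geodVert u a i = geodVert u b i := by
  rw [← geodVert_geodVert_of_le hi, h, geodVert_geodVert_of_le hi]

theorem wordDist_geodVert_succ {i : ℕ} (h : i < wordDist u v) :
    wordDist (geodVert u v i) (geodVert u v (i + 1)) = 1 := by
  rw [← geodVert_geodVert, wordDist_geodVert_left, wordDist_geodVert_right]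
  omega

theorem geodEdge_injOn : Set.InjOn (geodEdge u v) (Set.Iio (wordDist u v)) := by
  intro i hi k hk h
  have hdist := congrArg
    (Sym2.lift ⟨fun x y => wordDist u x + wordDist u y, fun _ _ => add_comm _ _⟩) h
  simp only [geodEdge, Sym2.lift_mk, wordDist_geodVert_left] at hdist
  simp only [Set.mem_Iio] at hi hk
  omega

theorem geodEdges_eq_image : geodEdges u v = geodEdge u v '' Set.Iio (wordDist u v) := by
  ext e
  rw [mem_geodEdges_iff]
  simp only [Set.mem_image, Set.mem_Iio, eq_comm]

theorem finite_geodEdges : (geodEdges u v).Finite := by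
  rw [geodEdges_eq_image]
  exact (Set.finite_Iio _).image _

theorem ncard_geodEdges : (geodEdges u v).ncard = wordDist u v := by
  rw [geodEdges_eq_image, geodEdge_injOn.ncard_image, Set.ncard_eq_toFinset_card',
    Set.toFinset_Iio, Nat.card_Iio]

theorem eq_geodVert_of_wordDist_add_eq {x : FreeGroup X}
    (h : wordDist u x + wordDist x v = wordDist u v) : x = geodVert u v (wordDist u x) := by
  have hword : toWord (u⁻¹ * v) = toWord (u⁻¹ * x) ++ toWord (x⁻¹ * v) := by
    rw [← toWord_mul_of_norm_mul_eq] <;> simp only [mul_assoc, mul_inv_cancel_left]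
    exact h.symm
  rw [geodVert, hword, wordDist, norm, List.take_left, mk_toWord, mul_inv_cancel_left]

/-- The reduced words of `u⁻¹p`, `p⁻¹q` and `q⁻¹v` concatenate without cancellation. -/
theorem wordDist_eq_of_separates (hpq : wordDist p q = 1)
    (hu : wordDist u q = wordDist u p + 1) (hv : wordDist v p = wordDist v q + 1) :
    wordDist u v = wordDist u p + 1 + wordDist q v := by
  have hpq' : p⁻¹ * q ≠ 1 := by
    rw [Ne, ← norm_eq_zero]
    exact hpq.trans_ne one_ne_zero
  have key :=
    norm_mul_mul_of_norm_mul_eq (x := u⁻¹ * p) (y := p⁻¹ * q) (z := q⁻¹ * v) ?_ ?_ hpq'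
  · simp only [mul_assoc, mul_inv_cancel_left] at key
    rw [← hpq]
    exact key
  · simp only [mul_assoc, mul_inv_cancel_left]
    rw [← hpq] at hu
    exact hu
  · simp only [mul_assoc, mul_inv_cancel_left]
    change wordDist p v = wordDist p q + wordDist q v
    rw [wordDist_comm p v, wordDist_comm q v]
    omega

theorem mk_mem_geodEdges_of_separates (hpq : wordDist p q = 1)
    (hu : wordDist u q = wordDist u p + 1) (hv : wordDist v p = wordDist v q + 1) :
    s(p, q) ∈ geodEdges u v := by
  have huv := wordDist_eq_of_separates hpq hu hv
  have hp : p = geodVert u v (wordDist u p) := by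
    refine eq_geodVert_of_wordDist_add_eq (le_antisymm ?_ (wordDist_triangle u p v))
    have := wordDist_triangle p q v
    omega
  have hq : q = geodVert u v (wordDist u q) := eq_geodVert_of_wordDist_add_eq (by omega)
  exact mem_geodEdges_iff.mpr ⟨wordDist u p, by omega, by rw [geodEdge, ← hp, ← hu, ← hq]⟩

theorem wordDist_eq_one_of_mk_mem_geodEdges (h : s(p, q) ∈ geodEdges u v) : wordDist p q = 1 := by
  obtain ⟨i, hi, he⟩ := mem_geodEdges_iff.mp h
  rcases Sym2.eq_iff.mp he with ⟨rfl, rfl⟩ | ⟨rfl, rfl⟩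
  · exact wordDist_geodVert_succ hi
  · rw [wordDist_comm]
    exact wordDist_geodVert_succ hi

theorem mk_mem_geodEdges_iff (hpq : wordDist p q = 1) :
    s(p, q) ∈ geodEdges u v ↔
      (wordDist u p < wordDist u q ↔ wordDist v q < wordDist v p) := by
  constructor
  · intro h
    obtain ⟨i, hi, he⟩ := mem_geodEdges_iff.mp h
    have hleft := wordDist_geodVert_left (u := u) (v := v)
    have hright := wordDist_geodVert_right (u := u) (v := v)
    rw [wordDist_comm v p, wordDist_comm v q]
    rcases Sym2.eq_iff.mp he with ⟨rfl, rfl⟩ | ⟨rfl, rfl⟩ <;>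
    · simp only [hleft, hright]
      omega
  · intro hsep
    rcases wordDist_eq_succ_or_eq_succ hpq u with hu | hu <;>
    rcases wordDist_eq_succ_or_eq_succ hpq v with hv | hv
    · omega
    · exact mk_mem_geodEdges_of_separates hpq hu hv
    · rw [Sym2.eq_swap]
      exact mk_mem_geodEdges_of_separates (by rwa [wordDist_comm]) hu hv
    · omega

theorem mem_geodEdges_iff_not_iff (a b c : FreeGroup X) (e : Sym2 (FreeGroup X)) :
    e ∈ geodEdges a c ↔ ¬(e ∈ geodEdges a b ↔ e ∈ geodEdges b c) := by
  induction e using Sym2.ind with | _ p q => ?_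
  by_cases hpq : wordDist p q = 1
  · rw [mk_mem_geodEdges_iff hpq, mk_mem_geodEdges_iff hpq, mk_mem_geodEdges_iff hpq]
    rcases wordDist_eq_succ_or_eq_succ hpq a with ha | ha <;>
    rcases wordDist_eq_succ_or_eq_succ hpq b with hb | hb <;>
    rcases wordDist_eq_succ_or_eq_succ hpq c with hc | hc <;> omega
  · have := mt (wordDist_eq_one_of_mk_mem_geodEdges (u := a) (v := b)) hpq
    have := mt (wordDist_eq_one_of_mk_mem_geodEdges (u := b) (v := c)) hpq
    have := mt (wordDist_eq_one_of_mk_mem_geodEdges (u := a) (v := c)) hpq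
    tauto

theorem geodEdges_self (a : FreeGroup X) : geodEdges a a = ∅ := by
  ext e
  simp [mem_geodEdges_iff, wordDist_self]

theorem geodEdges_of_wordDist_eq_one {a b : FreeGroup X} (h : wordDist a b = 1) :
    geodEdges a b = {s(a, b)} := by
  rw [geodEdges_eq_image, h, Order.Iio_one, Set.image_singleton, geodEdge, geodVert_zero,
    geodVert_of_le h.le]

theorem mem_geodUnion {H : Set (FreeGroup X)} {e : Sym2 (FreeGroup X)} :
    e ∈ geodUnion u H ↔ ∃ h ∈ H, e ∈ geodEdges u h := by
  simp [geodUnion]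

theorem geodUnion_insert (h : FreeGroup X) (H : Set (FreeGroup X)) :
    geodUnion u (insert h H) = geodEdges u h ∪ geodUnion u H :=
  Set.biUnion_insert h H _

theorem finite_geodUnion {H : Set (FreeGroup X)} (hH : H.Finite) : (geodUnion u H).Finite :=
  hH.biUnion fun _ _ => finite_geodEdges

theorem geodEdge_mem_geodEdges_iff {h b : FreeGroup X} {k : ℕ} (hk : k < wordDist u h) :
    geodEdge u h k ∈ geodEdges u b ↔
      k < wordDist u b ∧ geodVert u h (k + 1) = geodVert u b (k + 1) := by
  constructor
  · intro he
    obtain ⟨m, hm, he⟩ := mem_geodEdges_iff.mp he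
    have hleft := wordDist_geodVert_left (u := u) (v := h)
    have hleft' := wordDist_geodVert_left (u := u) (v := b)
    rcases Sym2.eq_iff.mp he with ⟨h₁, h₂⟩ | ⟨h₁, h₂⟩
    · have := congrArg (wordDist u) h₁
      rw [hleft, hleft'] at this
      obtain rfl : k = m := by omega
      exact ⟨hm, h₂⟩
    · have h₁' := congrArg (wordDist u) h₁
      have h₂' := congrArg (wordDist u) h₂
      rw [hleft, hleft'] at h₁' h₂'
      omega
  · rintro ⟨hkb, heq⟩
    refine mem_geodEdges_iff.mpr ⟨k, hkb, ?_⟩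
    rw [geodEdge, geodEdge, heq, geodVert_eq_geodVert_of_le heq k.le_succ]

end Geodesic

theorem exists_walk_length_eq_wordDist (x y : FreeGroup X) :
    ∃ w : (cayley (freeGenSet X)).Walk x y,
      w.length = wordDist x y ∧ ∀ i, geodVert x y i ∈ w.support := by
  induction hn : wordDist x y generalizing x with
  | zero =>
    obtain rfl := wordDist_eq_zero.mp hn
    exact ⟨.nil, rfl, fun i => by simp [geodVert_of_le (hn.trans_le i.zero_le)]⟩
  | succ n ih =>
    have hadj : (cayley (freeGenSet X)).Adj x (geodVert x y 1) := by
      have := wordDist_geodVert_succ (u := x) (v := y) (i := 0) (by omega)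
      rwa [geodVert_zero, zero_add, ← cayley_adj_iff] at this
    obtain ⟨w, hlen, hw⟩ := ih (geodVert x y 1) (by rw [wordDist_geodVert_right, hn]; rfl)
    refine ⟨.cons hadj w, by rw [SimpleGraph.Walk.length_cons, hlen], ?_⟩
    rintro (_ | i)
    · simp [geodVert_zero]
    · rw [add_comm, ← geodVert_geodVert]
      exact List.mem_cons_of_mem _ (hw i)

theorem mem_edges_of_mem_geodEdges {a b : FreeGroup X} {e : Sym2 (FreeGroup X)}
    (w : (cayley (freeGenSet X)).Walk a b) (he : e ∈ geodEdges a b) : e ∈ w.edges := by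
  induction w with
  | nil => simp [geodEdges_self] at he
  | @cons a c b hadj w ih =>
    rw [mem_geodEdges_iff_not_iff a c b, geodEdges_of_wordDist_eq_one (cayley_adj_iff.mp hadj)]
      at he
    by_cases hec : e ∈ geodEdges c b
    · exact List.mem_cons_of_mem _ (ih hec)
    · rw [SimpleGraph.Walk.edges_cons, List.mem_cons]
      tauto

theorem two_le_count_edges {a b h : FreeGroup X} {e : Sym2 (FreeGroup X)}
    (w : (cayley (freeGenSet X)).Walk a b) (hh : h ∈ w.support) (he : e ∈ geodEdges a h)
    (hne : e ∉ geodEdges a b) : 2 ≤ w.edges.count e := by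
  have he' : e ∈ geodEdges h b := by
    have := (mem_geodEdges_iff_not_iff a h b e).not.mp hne
    tauto
  have h₁ := List.count_pos_iff.mpr (mem_edges_of_mem_geodEdges (w.takeUntil h hh) he)
  have h₂ := List.count_pos_iff.mpr (mem_edges_of_mem_geodEdges (w.dropUntil h hh) he')
  rw [← w.take_spec hh, SimpleGraph.Walk.edges_append, List.count_append]
  omega

theorem two_mul_ncard_add_ncard_le_length {u v : FreeGroup X} (H : Finset (FreeGroup X))
    (w : (cayley (freeGenSet X)).Walk u v) (hw : ∀ h ∈ H, h ∈ w.support) :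
    2 * (geodUnion u ↑H \ geodEdges u v).ncard + (geodEdges u v).ncard ≤ w.length := by
  have hA := (finite_geodUnion (u := u) H.finite_toSet).sdiff (t := geodEdges u v)
  have hB := finite_geodEdges (u := u) (v := v)
  have hdisj : Disjoint hA.toFinset hB.toFinset := by
    rw [Set.Finite.disjoint_toFinset]
    exact Set.disjoint_sdiff_left
  rw [Set.ncard_eq_toFinset_card _ hA, Set.ncard_eq_toFinset_card _ hB]
  calc 2 * hA.toFinset.card + hB.toFinset.card
      = ∑ _ ∈ hA.toFinset, 2 + ∑ _ ∈ hB.toFinset, 1 := by simp [mul_comm]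
    _ ≤ ∑ e ∈ hA.toFinset, w.edges.count e + ∑ e ∈ hB.toFinset, w.edges.count e := by
        gcongr with e he e he
        · rw [Set.Finite.mem_toFinset] at he
          obtain ⟨h, hh, heh⟩ := mem_geodUnion.mp he.1
          exact two_le_count_edges w (hw h hh) heh he.2
        · rw [Set.Finite.mem_toFinset] at he
          exact List.count_pos_iff.mpr (mem_edges_of_mem_geodEdges w he)
    _ = ∑ e ∈ hA.toFinset ∪ hB.toFinset, w.edges.count e := (Finset.sum_union hdisj).symm
    _ ≤ w.length := by
        rw [← SimpleGraph.Walk.length_edges]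
        exact w.edges.sum_count_le_length _

theorem exists_branch_index (u h : FreeGroup X) (B : Set (FreeGroup X)) :
    ∃ j ≤ wordDist u h, (∀ k < j, geodEdge u h k ∈ geodUnion u B) ∧
      geodEdges u h \ geodUnion u B = geodEdge u h '' Set.Ico j (wordDist u h) := by
  set P : ℕ → Prop := fun k => k < wordDist u h ∧ geodEdge u h k ∈ geodUnion u B
  have hP_antitone : ∀ {j k}, j ≤ k → P k → P j := by
    rintro j k hjk ⟨hk, hmem⟩
    obtain ⟨b, hb, hbe⟩ := mem_geodUnion.mp hmem
    obtain ⟨hkb, heq⟩ := (geodEdge_mem_geodEdges_iff hk).mp hbe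
    refine ⟨by omega, mem_geodUnion.mpr ⟨b, hb, ?_⟩⟩
    exact (geodEdge_mem_geodEdges_iff (by omega)).mpr
      ⟨by omega, geodVert_eq_geodVert_of_le heq (by omega)⟩
  have hex : ∃ k, ¬P k := ⟨wordDist u h, fun hP => lt_irrefl _ hP.1⟩
  refine ⟨Nat.find hex, Nat.find_min' hex (fun hP => lt_irrefl _ hP.1),
    fun k hk => (not_not.mp (Nat.find_min hex hk)).2, ?_⟩
  ext e
  rw [Set.mem_sdiff, geodEdges_eq_image]
  constructor
  · rintro ⟨⟨k, hk, rfl⟩, hnew⟩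
    refine ⟨k, ⟨not_lt.mp fun hlt => hnew ?_, hk⟩, rfl⟩
    exact (not_not.mp (Nat.find_min hex hlt)).2
  · rintro ⟨k, ⟨hjk, hk⟩, rfl⟩
    exact ⟨⟨k, hk, rfl⟩, fun hmem => Nat.find_spec hex (hP_antitone hjk ⟨hk, hmem⟩)⟩

theorem exists_walk_covering_insert {u v : FreeGroup X} {B : Set (FreeGroup X)}
    (w : (cayley (freeGenSet X)).Walk u v) (hw : ∀ b ∈ B, ∀ i, geodVert u b i ∈ w.support)
    (h : FreeGroup X) :
    ∃ w' : (cayley (freeGenSet X)).Walk u v,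
      w'.length = w.length + 2 * (geodEdges u h \ geodUnion u B).ncard ∧
        ∀ b ∈ insert h B, ∀ i, geodVert u b i ∈ w'.support := by
  obtain ⟨j, hj, hold, hnew⟩ := exists_branch_index u h B
  have hbranch : ∀ i ≤ j, geodVert u h i ∈ w.support := by
    intro i hi
    rcases j with _ | j
    · rw [Nat.le_zero.mp hi, geodVert_zero]
      exact w.start_mem_support
    · obtain ⟨b, hb, hbe⟩ := mem_geodUnion.mp (hold j j.lt_succ_self)
      obtain ⟨-, heq⟩ := (geodEdge_mem_geodEdges_iff (by omega)).mp hbe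
      rw [geodVert_eq_geodVert_of_le heq hi]
      exact hw b hb i
  obtain ⟨g, hglen, hg⟩ := exists_walk_length_eq_wordDist (geodVert u h j) h
  obtain ⟨w', hlen, hw'⟩ := w.exists_detour (hbranch j le_rfl) g
  refine ⟨w', ?_, ?_⟩
  · rw [hlen, hglen, hnew, (geodEdge_injOn.mono Set.Ico_subset_Iio_self).ncard_image,
      Set.ncard_eq_toFinset_card', Set.toFinset_Ico, Nat.card_Ico, wordDist_geodVert_right]
  · rintro b (rfl | hb) i
    · rcases le_or_gt i j with hij | hji
      · exact hw' _ (Or.inl (hbranch i hij))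
      · rw [← Nat.add_sub_cancel' hji.le, ← geodVert_geodVert]
        exact hw' _ (Or.inr (hg _))
    · exact hw' _ (Or.inl (hw b hb i))

theorem exists_walk_length_eq_covering (u v : FreeGroup X) (H : Finset (FreeGroup X)) :
    ∃ w : (cayley (freeGenSet X)).Walk u v,
      w.length = 2 * (geodUnion u ↑H \ geodEdges u v).ncard + (geodEdges u v).ncard ∧
        ∀ b ∈ insert v (H : Set (FreeGroup X)), ∀ i, geodVert u b i ∈ w.support := by
  induction H using Finset.induction_on with
  | empty =>
    obtain ⟨w, hlen, hw⟩ := exists_walk_length_eq_wordDist u v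
    refine ⟨w, by simp [geodUnion, hlen, ncard_geodEdges], ?_⟩
    simpa using hw
  | @insert h H _ ih =>
    obtain ⟨w, hlen, hw⟩ := ih
    obtain ⟨w', hlen', hw'⟩ := exists_walk_covering_insert w hw h
    have hsplit : geodUnion u ↑(insert h H) \ geodEdges u v =
        (geodUnion u ↑H \ geodEdges u v) ∪ (geodEdges u h \ geodUnion u (insert v ↑H)) := by
      rw [Finset.coe_insert, geodUnion_insert, geodUnion_insert]
      ext e
      simp only [Set.mem_sdiff, Set.mem_union]
      tauto
    have hdisj : Disjoint (geodUnion u ↑H \ geodEdges u v)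
        (geodEdges u h \ geodUnion u (insert v ↑H)) := by
      rw [geodUnion_insert, Set.disjoint_left]
      simp only [Set.mem_sdiff, Set.mem_union]
      tauto
    refine ⟨w', ?_, ?_⟩
    · rw [hlen', hlen, hsplit, Set.ncard_union_eq hdisj
        ((finite_geodUnion H.finite_toSet).sdiff) finite_geodEdges.sdiff]
      ring
    · rw [Finset.coe_insert, Set.insert_comm]
      exact hw'

end FreeGroup

theorem freeGroup_TS_eq_general {X : Type*} [DecidableEq X]
    (u v : FreeGroup X) (H : Finset (FreeGroup X)) :
    TS (freeGenSet X) u v (↑H : Set (FreeGroup X)) =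
      2 * ((geodUnion u (↑H : Set (FreeGroup X))) \ geodEdges u v).ncard +
        (geodEdges u v).ncard := by
  obtain ⟨w, hlen, hw⟩ := FreeGroup.exists_walk_length_eq_covering u v H
  have hcover : ∀ h ∈ (↑H : Set (FreeGroup X)), h ∈ w.support := fun h hh => by
    simpa [FreeGroup.geodVert_of_le le_rfl] using
      hw h (Set.mem_insert_of_mem v hh) (FreeGroup.wordDist u h)
  refine le_antisymm (Nat.sInf_le ⟨w, hcover, hlen⟩) (le_csInf ⟨_, w, hcover, hlen⟩ ?_)
  rintro n ⟨w', hw', rfl⟩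
  exact FreeGroup.two_mul_ncard_add_ncard_le_length H w' hw'

/-- In the Cayley tree of the free group `F(X)` with respect to `S = X ∪ X⁻¹`, the
minimal length of a walk from `u` to `v` visiting every element of a finite set `H`
equals `2·|[u,H] \ [u,v]| + |[u,v]|`. -/
theorem freeGroup_TS_eq {X : Type*} [DecidableEq X] [Fintype X] [Nonempty X]
    (u v : FreeGroup X) (H : Finset (FreeGroup X)) :
    TS (freeGenSet X) u v (↑H : Set (FreeGroup X)) =
      2 * ((geodUnion u (↑H : Set (FreeGroup X))) \ geodEdges u v).ncard +
        (geodEdges u v).ncard :=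
  freeGroup_TS_eq_general u v H
end

section
/- Let B be an infinite finitely generated group and S a finite symmetric generating set of B. Then (B, S ∪ S² ∪ S³) is a quasi-Hamiltonian presentation, where S^k = {s₁s₂⋯s_k : s₁,…,s_k ∈ S}. In particular, every infinite finitely generated group admits a quasi-Hamiltonian presentation. -/
open scoped Classical

/-- `(B, S)` is a quasi-Hamiltonian presentation: there are `M ≥ 0` and a family `𝓕` of
finite subsets of `B`, each containing `1` and inducing a connected subgraph of the Cayley
graph, such that every ball about `1` is contained in a member of `𝓕`, and
`TS 1 x F ≤ |F| + M` for every `F ∈ 𝓕` and `x ∈ F`. -/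
def IsQuasiHamiltonian {B : Type*} [Group B] (S : Set B) : Prop :=
  ∃ M : ℕ, ∃ 𝓕 : Set (Finset B),
    (∀ F ∈ 𝓕, (1 : B) ∈ F ∧ ((cayley S).induce (↑F : Set B)).Connected) ∧
    (∀ n : ℕ, 1 ≤ n → ∃ F ∈ 𝓕, ∀ x : B, wordLength S x ≤ n → x ∈ F) ∧
    (∀ F ∈ 𝓕, ∀ x ∈ F, TS S 1 x (↑F : Set B) ≤ F.card + M)


/-!
Take `M = 0` and for `𝓕` the vertex sets of finite subtrees of `Cay(B, S)` rooted at `1`. By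
Sekanina's theorem the cube of a finite tree `T` has a Hamiltonian path from the root to any other
vertex, and one from the root to a neighbour of the root, which closes up into a walk of length
`|T|` through every vertex; edges of the cube of `Cay(B, S)` are edges of `Cay(B, S ∪ S² ∪ S³)`.
The ball of radius `n` for `S ∪ S² ∪ S³` lies in the ball of radius `3n` for `S`, which lies in a
finite rooted tree: grow the tree `{1}` by the finite set `T * S` at each step.
-/

namespace SimpleGraph

variable {V : Type*} (G : SimpleGraph V)

def cube : SimpleGraph V := fromRel fun x y => ∃ w : G.Walk x y, w.length ≤ 3

/-- `G.IsRootedTree r T`: `T` is the vertex set of a subtree of `G` rooted at `r`, presented as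
built by repeatedly grafting a rooted subtree onto the root along an edge of `G`. -/
inductive IsRootedTree [DecidableEq V] : V → Finset V → Prop
  | singleton (r : V) : IsRootedTree r {r}
  | graft {r c : V} {T₁ T₂ : Finset V} : IsRootedTree r T₁ → IsRootedTree c T₂ →
      Disjoint T₁ T₂ → G.Adj r c → IsRootedTree r (T₁ ∪ T₂)

variable {G}

theorem le_cube : G ≤ G.cube := fun x y h =>
  ⟨h.ne, Or.inl ⟨h.toWalk, by simp⟩⟩

theorem Adj.cube_adj_of_near {r c x y : V} (hrc : G.Adj r c) (hx : x = r ∨ G.Adj r x)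
    (hy : y = c ∨ G.Adj c y) (hxy : x ≠ y) : G.cube.Adj x y := by
  obtain ⟨w₁, hw₁⟩ : ∃ w : G.Walk x r, w.length ≤ 1 := by
    rcases hx with rfl | hx
    exacts [⟨.nil, by simp⟩, ⟨hx.symm.toWalk, by simp⟩]
  obtain ⟨w₂, hw₂⟩ : ∃ w : G.Walk c y, w.length ≤ 1 := by
    rcases hy with rfl | hy
    exacts [⟨.nil, by simp⟩, ⟨hy.toWalk, by simp⟩]
  exact ⟨hxy, Or.inl ⟨w₁.append (.cons hrc w₂), by
    rw [Walk.length_append, Walk.length_cons]; omega⟩⟩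

namespace Walk

variable {H : SimpleGraph V} [DecidableEq V] {u v b e : V}

theorem length_add_one_eq_card {T : Finset V} {p : H.Walk u v} (hp : p.IsPath) (hT : p.support.toFinset = T) :
    p.length + 1 = T.card := by
  rw [← hT, List.toFinset_card_of_nodup hp.support_nodup, length_support]

theorem IsPath.append_cons {p₁ : H.Walk u e} {p₂ : H.Walk b v} (hp₁ : p₁.IsPath)
    (hp₂ : p₂.IsPath) (hd : Disjoint p₁.support.toFinset p₂.support.toFinset) (h : H.Adj e b) :
    (p₁.append (.cons h p₂)).IsPath := by
  rw [isPath_def, support_append, support_cons, List.tail_cons]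
  exact hp₁.support_nodup.append hp₂.support_nodup (List.disjoint_toFinset_iff_disjoint.1 hd)

end Walk

namespace IsRootedTree

variable [DecidableEq V] {r v : V} {T : Finset V}

theorem root_mem (hT : G.IsRootedTree r T) : r ∈ T := by
  induction hT with
  | singleton r => exact Finset.mem_singleton_self r
  | graft _ _ _ _ ih _ => exact Finset.mem_union_left _ ih

theorem insert (hT : G.IsRootedTree r T) {x y : V} (hy : y ∈ T) (hx : x ∉ T)
    (hyx : G.Adj y x) : G.IsRootedTree r (insert x T) := by
  induction hT with
  | singleton r =>
    rw [Finset.mem_singleton] at hy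
    subst hy
    rw [Finset.insert_eq, Finset.union_comm]
    exact graft (singleton y) (singleton x) (by simpa [eq_comm] using hx) hyx
  | graft h₁ h₂ hd hrc ih₁ ih₂ =>
    rw [Finset.mem_union, not_or] at hx
    rcases Finset.mem_union.1 hy with hy | hy
    · rw [← Finset.insert_union]
      exact graft (ih₁ hy hx.1) h₂ (Finset.disjoint_insert_left.2 ⟨hx.2, hd⟩) hrc
    · rw [← Finset.union_insert]
      exact graft h₁ (ih₂ hy hx.2) (Finset.disjoint_insert_right.2 ⟨hx.1, hd⟩) hrc

theorem union_of_forall_exists_adj (hT : G.IsRootedTree r T) {A : Finset V}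
    (hA : ∀ x ∈ A, x ∉ T → ∃ y ∈ T, G.Adj y x) : G.IsRootedTree r (T ∪ A) := by
  induction A using Finset.induction_on with
  | empty => simpa using hT
  | insert a A _ ih =>
    have hTA := ih fun x hx => hA x (Finset.mem_insert_of_mem hx)
    rw [Finset.union_insert]
    by_cases ha : a ∈ T ∪ A
    · rwa [Finset.insert_eq_of_mem ha]
    · rw [Finset.mem_union, not_or] at ha
      obtain ⟨y, hy, hya⟩ := hA a (Finset.mem_insert_self a A) ha.1
      exact hTA.insert (Finset.mem_union_left _ hy) (by simpa using ha) hya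

theorem exists_graft_of_mem (hT : G.IsRootedTree r T) (hv : v ∈ T) (hvr : v ≠ r) :
    ∃ c T₁ T₂, G.IsRootedTree r T₁ ∧ G.IsRootedTree c T₂ ∧ Disjoint T₁ T₂ ∧ G.Adj r c ∧
      T₁ ∪ T₂ = T ∧ v ∈ T₂ := by
  induction hT with
  | singleton r => exact absurd (Finset.mem_singleton.1 hv) hvr
  | @graft r c T₁ T₂ h₁ h₂ hd hrc ih₁ _ =>
    rcases Finset.mem_union.1 hv with hv | hv
    · obtain ⟨c', A, C, hA, hC, hAC, hrc', rfl, hvC⟩ := ih₁ hv hvr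
      rw [Finset.disjoint_union_left] at hd
      refine ⟨c', A ∪ T₂, C, graft hA h₂ hd.1 hrc, hC,
        Finset.disjoint_union_left.2 ⟨hAC, hd.2.symm⟩, hrc', ?_, hvC⟩
      rw [Finset.union_right_comm]
    · exact ⟨c, T₁, T₂, h₁, h₂, hd, hrc, rfl, hv⟩

theorem exists_cube_path_to_near (hT : G.IsRootedTree r T)
    (hP : ∀ v ∈ T, v ≠ r → ∃ p : G.cube.Walk r v, p.IsPath ∧ p.support.toFinset = T) :
    ∃ e, (e = r ∨ G.Adj r e) ∧ ∃ p : G.cube.Walk r e, p.IsPath ∧ p.support.toFinset = T := by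
  cases hT with
  | singleton r => exact ⟨r, Or.inl rfl, .nil, Walk.IsPath.nil, by simp⟩
  | graft h₁ h₂ hd hrc =>
    have hcr : _ ≠ r := fun h => Finset.disjoint_left.1 hd h₁.root_mem (h ▸ h₂.root_mem)
    exact ⟨_, Or.inr hrc, hP _ (Finset.mem_union_right _ h₂.root_mem) hcr⟩

theorem exists_cube_path_from_near (hT : G.IsRootedTree r T)
    (hP : ∀ v ∈ T, v ≠ r → ∃ p : G.cube.Walk r v, p.IsPath ∧ p.support.toFinset = T)
    (hv : v ∈ T) :
    ∃ b, (b = r ∨ G.Adj r b) ∧ ∃ p : G.cube.Walk b v, p.IsPath ∧ p.support.toFinset = T := by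
  by_cases hvr : v = r
  · subst hvr
    obtain ⟨e, he, p, hp, hpT⟩ := hT.exists_cube_path_to_near hP
    exact ⟨e, he, p.reverse, hp.reverse, by simpa using hpT⟩
  · exact ⟨r, Or.inl rfl, hP v hv hvr⟩

/-- Sekanina: the cube of a finite tree is Hamiltonian-connected. Graft `T` as `T₁ ∪ T₂` with
`v ∈ T₂`; a Hamiltonian path of `T₁` from `r` ending next to `r`, followed by one of `T₂` starting
next to its root and ending at `v`, is a Hamiltonian path of `T`, the junction step having length
at most `3` in `G`. -/
theorem exists_cube_path (hT : G.IsRootedTree r T) (hv : v ∈ T) (hvr : v ≠ r) :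
    ∃ p : G.cube.Walk r v, p.IsPath ∧ p.support.toFinset = T := by
  induction hn : T.card using Nat.strong_induction_on generalizing r v T with
  | _ n ih =>
  obtain ⟨c, T₁, T₂, h₁, h₂, hd, hrc, rfl, hv₂⟩ := hT.exists_graft_of_mem hv hvr
  rw [Finset.card_union_of_disjoint hd] at hn
  have hcard₁ : T₁.card < n := by have := Finset.card_pos.2 ⟨_, h₂.root_mem⟩; omega
  have hcard₂ : T₂.card < n := by have := Finset.card_pos.2 ⟨_, h₁.root_mem⟩; omega
  obtain ⟨e, he, p₁, hp₁, hpT₁⟩ :=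
    h₁.exists_cube_path_to_near fun w hw hwr => ih _ hcard₁ h₁ hw hwr rfl
  obtain ⟨b, hb, p₂, hp₂, hpT₂⟩ :=
    h₂.exists_cube_path_from_near (fun w hw hwc => ih _ hcard₂ h₂ hw hwc rfl) hv₂
  have heb : e ≠ b := by
    rintro rfl
    exact Finset.disjoint_left.1 hd (hpT₁ ▸ List.mem_toFinset.2 p₁.end_mem_support)
      (hpT₂ ▸ List.mem_toFinset.2 p₂.start_mem_support)
  refine ⟨p₁.append (.cons (hrc.cube_adj_of_near he hb heb) p₂),
    hp₁.append_cons hp₂ (hpT₁ ▸ hpT₂ ▸ hd) _, ?_⟩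
  rw [Walk.support_append, Walk.support_cons, List.tail_cons, List.toFinset_append, hpT₁, hpT₂]

theorem exists_cube_walk (hT : G.IsRootedTree r T) (hv : v ∈ T) :
    ∃ p : G.cube.Walk r v, p.length ≤ T.card ∧ p.support.toFinset = T := by
  by_cases hvr : v = r
  · subst hvr
    obtain ⟨e, he | he, p, hp, hpT⟩ :=
      hT.exists_cube_path_to_near fun w hw hwr => hT.exists_cube_path hw hwr
    · subst he
      exact ⟨p, by have := Walk.length_add_one_eq_card hp hpT; omega, hpT⟩
    · refine ⟨p.concat (le_cube he.symm), ?_, ?_⟩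
      · rw [Walk.length_concat, Walk.length_add_one_eq_card hp hpT]
      · rw [Walk.support_concat, List.toFinset_append, hpT, List.toFinset_cons, List.toFinset_nil,
          insert_empty_eq, Finset.union_singleton, Finset.insert_eq_of_mem hT.root_mem]
  · obtain ⟨p, hp, hpT⟩ := hT.exists_cube_path hv hvr
    exact ⟨p, by have := Walk.length_add_one_eq_card hp hpT; omega, hpT⟩

end IsRootedTree
end SimpleGraph

section Cayley

open SimpleGraph
open scoped Pointwise

variable {B : Type*} [Group B] {S : Set B}

theorem cayley_adj_mul {x s : B} (hs : s ∈ S) (hx : x ≠ x * s) : (cayley S).Adj x (x * s) :=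
  (fromRel_adj _ _ _).2 ⟨hx, Or.inl ⟨s, hs, rfl⟩⟩

theorem inv_mul_mem_pow_length (hsymm : ∀ s ∈ S, s⁻¹ ∈ S) {x y : B} (w : (cayley S).Walk x y) :
    x⁻¹ * y ∈ S ^ w.length := by
  induction w with
  | nil => simp
  | @cons x z y h w ih =>
    obtain ⟨s, hs, hz⟩ : ∃ s ∈ S, z = x * s := by
      rcases ((fromRel_adj _ _ _).1 h).2 with ⟨s, hs, rfl⟩ | ⟨s, hs, rfl⟩
      exacts [⟨s, hs, rfl⟩, ⟨s⁻¹, hsymm s hs, by group⟩]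
    rw [Walk.length_cons, pow_succ']
    subst hz
    exact ⟨s, hs, _, ih, by group⟩

theorem cube_cayley_le (hsymm : ∀ s ∈ S, s⁻¹ ∈ S) :
    (cayley S).cube ≤ cayley (S ∪ S * S ∪ S * S * S) := by
  have key : ∀ x y : B, x ≠ y → (∃ w : (cayley S).Walk x y, w.length ≤ 3) →
      x⁻¹ * y ∈ S ∪ S * S ∪ S * S * S := by
    rintro x y hxy ⟨w, hw⟩
    have hmem := inv_mul_mem_pow_length hsymm w
    interval_cases h : w.length
    · exact absurd (by simpa [inv_mul_eq_one] using hmem) hxy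
    · exact Or.inl (Or.inl (by simpa using hmem))
    · exact Or.inl (Or.inr (by simpa [sq] using hmem))
    · exact Or.inr (by simpa [pow_succ] using hmem)
  rintro x y hxy
  obtain ⟨hne, hw | hw⟩ := (fromRel_adj _ _ _).1 hxy
  · exact (fromRel_adj _ _ _).2 ⟨hne, Or.inl ⟨_, key x y hne hw, by group⟩⟩
  · exact (fromRel_adj _ _ _).2 ⟨hne, Or.inr ⟨_, key y x hne.symm hw, by group⟩⟩

theorem IsSymmGen.exists_list_prod_eq (hS : IsSymmGen S) (x : B) :
    ∃ l : List B, (∀ s ∈ l, s ∈ S) ∧ l.prod = x := by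
  have hx : x ∈ Submonoid.closure (S ∪ S⁻¹) := by
    rw [← Subgroup.closure_toSubmonoid, hS.closure_eq_top]
    trivial
  obtain ⟨l, hl, rfl⟩ := Submonoid.exists_list_of_mem_closure hx
  refine ⟨l, fun s hs => ?_, rfl⟩
  rcases hl s hs with h | h
  exacts [h, by simpa using hS.symm _ h]

theorem exists_list_length_eq_wordLength {l : List B} (hl : ∀ s ∈ l, s ∈ S) :
    ∃ l' : List B, (∀ s ∈ l', s ∈ S) ∧ l'.length = wordLength S l.prod ∧ l'.prod = l.prod :=
  Nat.sInf_mem (s := {n | ∃ l' : List B, (∀ s ∈ l', s ∈ S) ∧ l'.length = n ∧ l'.prod = l.prod})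
    ⟨l.length, l, hl, rfl, rfl⟩

theorem TS_le_length {b b' : B} {F : Set B} (w : (cayley S).Walk b b')
    (hw : ∀ x ∈ F, x ∈ w.support) : TS S b b' F ≤ w.length :=
  Nat.sInf_le ⟨w, hw, rfl⟩

theorem exists_list_of_forall_mem_union_mul {l : List B}
    (hl : ∀ g ∈ l, g ∈ S ∪ S * S ∪ S * S * S) :
    ∃ l' : List B, (∀ s ∈ l', s ∈ S) ∧ l'.length ≤ 3 * l.length ∧ l'.prod = l.prod := by
  induction l with
  | nil => exact ⟨[], by simp, by simp, rfl⟩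
  | cons g l ih =>
    obtain ⟨l', hl', hlen, hprod⟩ := ih fun g hg => hl g (List.mem_cons_of_mem _ hg)
    obtain ⟨m, hm, hmlen, rfl⟩ :
        ∃ m : List B, (∀ s ∈ m, s ∈ S) ∧ m.length ≤ 3 ∧ m.prod = g := by
      rcases hl g List.mem_cons_self with
        (hg | ⟨a, ha, b, hb, rfl⟩) | ⟨_, ⟨a, ha, b, hb, rfl⟩, c, hc, rfl⟩
      · exact ⟨[g], by simpa using hg, by simp, by simp⟩
      · exact ⟨[a, b], by simp [ha, hb], by simp, by simp⟩
      · exact ⟨[a, b, c], by simp [ha, hb, hc], by simp, by simp [mul_assoc]⟩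
    refine ⟨m ++ l', fun s hs => ?_, by rw [List.length_append, List.length_cons]; omega,
      by rw [List.prod_append, hprod, List.prod_cons]⟩
    rcases List.mem_append.1 hs with hs | hs
    exacts [hm s hs, hl' s hs]

theorem exists_isRootedTree_forall_list_prod_mem (hS : S.Finite) (m : ℕ) :
    ∃ T : Finset B, (cayley S).IsRootedTree 1 T ∧
      ∀ l : List B, (∀ s ∈ l, s ∈ S) → l.length ≤ m → l.prod ∈ T := by
  induction m with
  | zero =>
    refine ⟨{1}, .singleton 1, fun l _ hl => ?_⟩
    simp [List.eq_nil_of_length_eq_zero (Nat.le_zero.1 hl)]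
  | succ m ih =>
    obtain ⟨T, hT, hTl⟩ := ih
    refine ⟨T ∪ T * hS.toFinset, hT.union_of_forall_exists_adj ?_, fun l hl hlen => ?_⟩
    · intro x hx hxT
      obtain ⟨y, hy, s, hs, rfl⟩ := Finset.mem_mul.1 hx
      exact ⟨y, hy, cayley_adj_mul (hS.mem_toFinset.1 hs) fun h => hxT (h ▸ hy)⟩
    · rcases l.eq_nil_or_concat with rfl | ⟨l, s, rfl⟩
      · exact Finset.mem_union_left _ (hTl [] (by simp) (by simp))
      · simp only [List.concat_eq_append, List.mem_append, List.mem_singleton] at hl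
        rw [List.prod_concat]
        exact Finset.mem_union_right _ (Finset.mul_mem_mul
          (hTl l (fun t ht => hl t (Or.inl ht)) (by rw [List.length_concat] at hlen; omega))
          (hS.mem_toFinset.2 (hl s (Or.inr rfl))))

end Cayley

open scoped Pointwise in
theorem cube_genset_isQuasiHamiltonian_general {B : Type*} [Group B]
    (S : Set B) (hS : IsSymmGen S) :
    IsQuasiHamiltonian (S ∪ S * S ∪ S * S * S) := by
  have hle : (cayley S).cube ≤ cayley (S ∪ S * S ∪ S * S * S) := cube_cayley_le hS.symm
  refine ⟨0, {T | (cayley S).IsRootedTree 1 T}, fun T hT => ⟨hT.root_mem, ?_⟩,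
    fun n _ => ?_, fun T hT x hx => ?_⟩
  · obtain ⟨p, -, hpT⟩ := hT.exists_cube_walk hT.root_mem
    have hsupp : {v | v ∈ (p.mapLe hle).support} = (T : Set B) := by ext; simp [← hpT]
    exact hsupp ▸ (p.mapLe hle).connected_induce_support
  · obtain ⟨T, hT, hTl⟩ := exists_isRootedTree_forall_list_prod_mem hS.finite (3 * n)
    refine ⟨T, hT, fun x hx => ?_⟩
    obtain ⟨l, hl, rfl⟩ := hS.exists_list_prod_eq x
    obtain ⟨l₃, hl₃, hlen₃, hprod₃⟩ :=
      exists_list_length_eq_wordLength (S := S ∪ S * S ∪ S * S * S) (l := l)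
        fun s hs => Or.inl (Or.inl (hl s hs))
    obtain ⟨l', hl', hlen', hprod'⟩ := exists_list_of_forall_mem_union_mul hl₃
    exact hprod₃ ▸ hprod' ▸ hTl l' hl' (by omega)
  · obtain ⟨p, hlen, hpT⟩ := hT.exists_cube_walk hx
    refine (TS_le_length (p.mapLe hle) fun y hy => ?_).trans (by simpa using hlen)
    simpa [← hpT] using hy

open scoped Pointwise in
/-- For every infinite finitely generated group `B` with finite symmetric generating set
`S`, the pair `(B, S ∪ S² ∪ S³)` is a quasi-Hamiltonian presentation. -/
theorem cube_genset_isQuasiHamiltonian {B : Type*} [Group B] [Infinite B]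
    (S : Set B) (hS : IsSymmGen S) :
    IsQuasiHamiltonian (S ∪ S * S ∪ S * S * S) :=
  cube_genset_isQuasiHamiltonian_general S hS
end

section
/- For every finite connected graph Γ, the cube Γ³ is Hamiltonian-connected: any two distinct vertices of Γ³ are joined by a Hamiltonian path. -/
/-!
Induct on the graph `G` (a finite graph has finitely many subgraphs), proving that the cube
of every connected component is Hamiltonian-connected. Given `u ≠ v`, let `ub` be the first
edge of a `u`–`v` path. If `ub` is not a bridge, deleting it changes no component. If it is,
deleting it splits the component of `u` into the part `A ∋ u` and the part `B ∋ b, v`. By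
induction `A³` has a Hamiltonian path from `u` to a vertex `w` with `d(u, w) ≤ 1`, and `B³` one
from a vertex `z` with `d(b, z) ≤ 1` to `v` (take `z = b` unless `b = v`); since `d(w, z) ≤ 3`
through `ub`, the two paths join into a Hamiltonian path of the component in `G³`.
-/

open scoped Classical

/-- The cube `Γ³` of a graph `Γ`: distinct vertices are adjacent iff their distance
in `Γ` is at most `3`. -/
def cubeGraph {V : Type*} (G : SimpleGraph V) : SimpleGraph V where
  Adj x y := x ≠ y ∧ G.dist x y ≤ 3
  symm := ⟨by
    rintro x y ⟨h1, h2⟩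
    exact ⟨h1.symm, by rwa [SimpleGraph.dist_comm]⟩⟩
  loopless := ⟨fun x h => h.1 rfl⟩

namespace SimpleGraph

variable {V : Type*} {G H : SimpleGraph V} {u v w b x : V}

/-- The `k`-th power of `G`, defined through walks rather than `dist`: since `dist` is `0`
between unreachable vertices, `cubeGraph` is not monotone in `G`. -/
def walkPower (G : SimpleGraph V) (k : ℕ) : SimpleGraph V where
  Adj x y := x ≠ y ∧ ∃ p : G.Walk x y, p.length ≤ k
  symm := ⟨fun _ _ ⟨hne, p, hp⟩ => ⟨hne.symm, p.reverse, by rwa [Walk.length_reverse]⟩⟩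
  loopless := ⟨fun _ h => h.1 rfl⟩

lemma walkPower_mono (h : G ≤ H) (k : ℕ) : G.walkPower k ≤ H.walkPower k :=
  fun _ _ ⟨hne, p, hp⟩ => ⟨hne, p.mapLe h, by rwa [Walk.length_mapLe]⟩

lemma walkPower_three_le_cubeGraph : G.walkPower 3 ≤ cubeGraph G :=
  fun _ _ ⟨hne, p, hp⟩ => ⟨hne, (dist_le p).trans hp⟩

namespace Walk

def IsHamiltonianOn (p : G.Walk u v) (S : Set V) : Prop :=
  p.IsPath ∧ ∀ x, x ∈ p.support ↔ x ∈ S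

lemma isHamiltonianOn_nil : (nil : G.Walk u u).IsHamiltonianOn {u} :=
  ⟨IsPath.nil, by simp⟩

lemma IsHamiltonianOn.reverse {p : G.Walk u v} {S : Set V} (hp : p.IsHamiltonianOn S) :
    p.reverse.IsHamiltonianOn S :=
  ⟨hp.1.reverse, by simpa using hp.2⟩

lemma IsHamiltonianOn.mapLe {p : G.Walk u v} {S : Set V} (hp : p.IsHamiltonianOn S)
    (h : G ≤ H) : (p.mapLe h).IsHamiltonianOn S := by
  simpa [IsHamiltonianOn, isPath_def, support_mapLe_eq_support] using hp

lemma IsHamiltonianOn.append_cons {p : G.Walk u v} {q : G.Walk w x} {S T : Set V}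
    (hp : p.IsHamiltonianOn S) (hq : q.IsHamiltonianOn T) (hST : Disjoint S T)
    (h : G.Adj v w) : (p.append (cons h q)).IsHamiltonianOn (S ∪ T) := by
  have hsupp : (p.append (cons h q)).support = p.support ++ q.support := by
    simp [support_append]
  refine ⟨IsPath.mk' ?_, fun y => ?_⟩
  · rw [hsupp]
    refine hp.1.support_nodup.append hq.1.support_nodup fun y hyp hyq => ?_
    exact hST.notMem_of_mem_left ((hp.2 y).1 hyp) ((hq.2 y).1 hyq)
  · rw [hsupp, List.mem_append, hp.2, hq.2, Set.mem_union]

lemma IsHamiltonianOn.isHamiltonian {p : G.Walk u v} (hp : p.IsHamiltonianOn Set.univ) :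
    p.IsHamiltonian :=
  hp.1.isHamiltonian_of_mem fun y => (hp.2 y).2 trivial

end Walk

lemma deleteEdges_lt_of_adj (h : G.Adj u b) : G.deleteEdges {s(u, b)} < G :=
  (deleteEdges_le _).lt_of_ne fun hG => by
    simpa using (hG.symm ▸ h : (G.deleteEdges {s(u, b)}).Adj u b)

lemma Adj.reachable_iff_deleteEdges (hub : G.Adj u b) :
    G.Reachable u x ↔
      (G.deleteEdges {s(u, b)}).Reachable u x ∨ (G.deleteEdges {s(u, b)}).Reachable b x := by
  refine ⟨fun h => ?_, ?_⟩
  · rw [reachable_iff_reflTransGen] at h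
    induction h with
    | refl => exact Or.inl .rfl
    | @tail y z _ hyz ih =>
      by_cases he : s(y, z) = s(u, b)
      · rcases Sym2.eq_iff.1 he with ⟨-, rfl⟩ | ⟨-, rfl⟩
        · exact Or.inr .rfl
        · exact Or.inl .rfl
      · have hyz' := (deleteEdges_adj.2 ⟨hyz, Set.notMem_singleton_iff.2 he⟩).reachable
        exact ih.imp (·.trans hyz') (·.trans hyz')
  · rintro (h | h)
    · exact h.mono (deleteEdges_le _)
    · exact hub.reachable.trans (h.mono (deleteEdges_le _))

lemma Reachable.exists_adj_reachable_deleteEdges (h : G.Reachable u v) (huv : u ≠ v) :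
    ∃ b, G.Adj u b ∧ (G.deleteEdges {s(u, b)}).Reachable b v := by
  obtain ⟨p, hp⟩ := h.exists_isPath
  cases p with
  | nil => exact absurd rfl huv
  | cons hub t =>
    rw [Walk.cons_isPath_iff] at hp
    exact ⟨_, hub, reachable_deleteEdges_iff_exists_walk.2
      ⟨t, fun he => hp.2 (t.fst_mem_support_of_mem_edges he)⟩⟩

/-- The `k`-th power of every connected component of `G` is Hamiltonian-connected. -/
def IsPowerHamiltonianOnComponents (G : SimpleGraph V) (k : ℕ) : Prop :=
  ∀ ⦃u v⦄, u ≠ v → G.Reachable u v →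
    ∃ p : (G.walkPower k).Walk u v, p.IsHamiltonianOn {x | G.Reachable u x}

namespace IsPowerHamiltonianOnComponents

variable {k : ℕ}

lemma exists_path_ending_near_start (hG : G.IsPowerHamiltonianOnComponents k) (a : V) :
    ∃ w, (∃ q : G.Walk a w, q.length ≤ 1) ∧
      ∃ p : (G.walkPower k).Walk a w, p.IsHamiltonianOn {x | G.Reachable a x} := by
  by_cases hne : ∃ x, G.Reachable a x ∧ x ≠ a
  · obtain ⟨x, ⟨r⟩, hxa⟩ := hne
    have hac := r.adj_snd (Walk.not_nil_of_ne hxa.symm)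
    obtain ⟨p, hp⟩ := hG hac.ne hac.reachable
    exact ⟨_, ⟨hac.toWalk, by simp⟩, p, hp⟩
  · push Not at hne
    have hS : {x | G.Reachable a x} = {a} := Set.ext fun x => ⟨hne x, fun hx => hx ▸ .rfl⟩
    exact ⟨a, ⟨.nil, by simp⟩, .nil, hS ▸ Walk.isHamiltonianOn_nil⟩

lemma exists_path_starting_near (hG : G.IsPowerHamiltonianOnComponents k)
    (hbv : G.Reachable b v) :
    ∃ z, (∃ q : G.Walk b z, q.length ≤ 1) ∧
      ∃ p : (G.walkPower k).Walk z v, p.IsHamiltonianOn {x | G.Reachable b x} := by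
  by_cases hb : b = v
  · subst hb
    obtain ⟨z, hq, p, hp⟩ := hG.exists_path_ending_near_start b
    exact ⟨z, hq, p.reverse, hp.reverse⟩
  · obtain ⟨p, hp⟩ := hG hb hbv
    exact ⟨b, ⟨.nil, by simp⟩, p, hp⟩

lemma exists_path_of_not_isBridge
    (hG' : (G.deleteEdges {s(u, b)}).IsPowerHamiltonianOnComponents k) (hub : G.Adj u b)
    (hnb : ¬G.IsBridge s(u, b)) (hbv : (G.deleteEdges {s(u, b)}).Reachable b v) (huv : u ≠ v) :
    ∃ p : (G.walkPower k).Walk u v, p.IsHamiltonianOn {x | G.Reachable u x} := by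
  have hbr : (G.deleteEdges {s(u, b)}).Reachable u b := by simpa [isBridge_iff] using hnb
  obtain ⟨p, hp⟩ := hG' huv (hbr.trans hbv)
  have hS : {x | G.Reachable u x} = {x | (G.deleteEdges {s(u, b)}).Reachable u x} :=
    Set.ext fun x => hub.reachable_iff_deleteEdges.trans (or_iff_left_of_imp hbr.trans)
  exact ⟨p.mapLe (walkPower_mono (deleteEdges_le _) k), hS ▸ hp.mapLe _⟩

lemma exists_path_of_isBridge
    (hG' : (G.deleteEdges {s(u, b)}).IsPowerHamiltonianOnComponents k) (hk : 3 ≤ k)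
    (hub : G.Adj u b) (hbr : G.IsBridge s(u, b)) (hbv : (G.deleteEdges {s(u, b)}).Reachable b v) :
    ∃ p : (G.walkPower k).Walk u v, p.IsHamiltonianOn {x | G.Reachable u x} := by
  set G' := G.deleteEdges {s(u, b)}
  have hle : G' ≤ G := deleteEdges_le _
  obtain ⟨w, ⟨q₁, hq₁⟩, p₁, hp₁⟩ := hG'.exists_path_ending_near_start u
  obtain ⟨z, ⟨q₂, hq₂⟩, p₂, hp₂⟩ := hG'.exists_path_starting_near hbv
  have hdisj : Disjoint {x | G'.Reachable u x} {x | G'.Reachable b x} :=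
    Set.disjoint_left.2 fun x hux hbx => hbr (hux.trans hbx.symm)
  -- `w` and `z` are joined by the walk `w ~ u – b ~ z` of length at most `1 + 1 + 1`.
  have hwz : (G.walkPower k).Adj w z := by
    have hw : w ∈ {x | G'.Reachable u x} := (hp₁.2 w).1 p₁.end_mem_support
    have hz : z ∈ {x | G'.Reachable b x} := (hp₂.2 z).1 p₂.start_mem_support
    refine ⟨hdisj.ne_of_mem hw hz,
      (q₁.mapLe hle).reverse.append (.cons hub (q₂.mapLe hle)), ?_⟩
    simp only [Walk.length_append, Walk.length_reverse, Walk.length_cons, Walk.length_mapLe]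
    omega
  have hS : {x | G.Reachable u x} = {x | G'.Reachable u x} ∪ {x | G'.Reachable b x} :=
    Set.ext fun x => hub.reachable_iff_deleteEdges
  have hmono := walkPower_mono hle k
  exact ⟨(p₁.mapLe hmono).append (.cons hwz (p₂.mapLe hmono)),
    hS ▸ (hp₁.mapLe hmono).append_cons (hp₂.mapLe hmono) hdisj hwz⟩

end IsPowerHamiltonianOnComponents

theorem isPowerHamiltonianOnComponents [Finite V] (G : SimpleGraph V) {k : ℕ} (hk : 3 ≤ k) :
    G.IsPowerHamiltonianOnComponents k := by
  induction G using WellFoundedLT.induction with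
  | _ G ih =>
  intro u v huv h
  obtain ⟨b, hub, hbv⟩ := h.exists_adj_reachable_deleteEdges huv
  have hG' := ih _ (deleteEdges_lt_of_adj hub)
  by_cases hbr : G.IsBridge s(u, b)
  · exact hG'.exists_path_of_isBridge hk hub hbr hbv
  · exact hG'.exists_path_of_not_isBridge hub hbr hbv huv

end SimpleGraph

/-- The cube of a finite connected graph is Hamiltonian-connected: any two distinct
vertices are joined by a Hamiltonian path in `Γ³`. -/
theorem cubeGraph_hamiltonianConnected {V : Type*} [Fintype V] (G : SimpleGraph V)
    (hG : G.Connected) (u v : V) (huv : u ≠ v) :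
    ∃ p : (cubeGraph G).Walk u v, p.IsHamiltonian := by
  obtain ⟨p, hp⟩ := G.isPowerHamiltonianOnComponents le_rfl huv (hG.preconnected u v)
  rw [show {x | G.Reachable u x} = Set.univ from Set.eq_univ_of_forall (hG.preconnected u)] at hp
  exact ⟨p.mapLe SimpleGraph.walkPower_three_le_cubeGraph, (hp.mapLe _).isHamiltonian⟩
end
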